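/- arXiv:2411.00250 — 8 statements merged into one kernel-verified Lean document; each statement's English description precedes it below -/
import Mathlib

section
/- Let X be a finite set of variables and let s be an odd positive integer. For each i = 1,…,s let A_i and B_i be subsets of X with A_i ∩ B_i = ∅, and define the real polynomial f_i = ∏_{v ∈ A_i} x_v + ∏_{v ∈ B_i} x_v (so each f_i is a sum of two coprime square-free monomials). Assume that for every variable v ∈ X, the number of indices i ∈ {1,…,s} with v ∈ A_i ∪ B_i is even. Then there is no assignment x : X → ℝ with x_v ≠ 0 for all v ∈ X such that f_i(x) = 0 for every i = 1,…,s. -/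
/-- Let `X` be a finite set of variables and `s` an odd positive integer.
For each `i` let `A i` and `B i` be disjoint subsets of `X`, giving the polynomial
`f i = ∏_{v ∈ A i} x v + ∏_{v ∈ B i} x v` (a sum of two coprime square-free monomials).
If every variable appears in an even number of the `f i` (i.e. the number of indices `i`
with `v ∈ A i ∪ B i` is even for every `v`), then the system `f i = 0` has no solution
in which all variables are nonzero. -/
theorem stmt_0 (X : Type*) [Fintype X] [DecidableEq X] (s : ℕ) (hpos : 0 < s) (hodd : Odd s)
    (A B : Fin s → Finset X) (hdisj : ∀ i, Disjoint (A i) (B i))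
    (heven : ∀ v : X, Even ((Finset.univ.filter (fun i : Fin s => v ∈ A i ∪ B i)).card)) :
    ¬ ∃ x : X → ℝ, (∀ v, x v ≠ 0) ∧
      ∀ i : Fin s, (∏ v ∈ A i, x v) + (∏ v ∈ B i, x v) = 0 := by
  rintro ⟨x, hx, hf⟩
  set P : ℝ := ∏ i : Fin s, ∏ v ∈ A i ∪ B i, x v with hP
  -- P is negative
  have hneg : P < 0 := by
    have hfac : ∀ i : Fin s, ∏ v ∈ A i ∪ B i, x v = (-1) * (∏ v ∈ B i, x v) ^ 2 := by
      intro i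
      rw [Finset.prod_union (hdisj i)]
      have := hf i
      have hA : ∏ v ∈ A i, x v = -(∏ v ∈ B i, x v) := by linarith
      rw [hA]; ring
    have hBne : ∀ i : Fin s, (∏ v ∈ B i, x v) ≠ 0 := fun i =>
      Finset.prod_ne_zero_iff.mpr fun v _ => hx v
    calc P = ∏ i : Fin s, (-1) * (∏ v ∈ B i, x v) ^ 2 := by
            rw [hP]; exact Finset.prod_congr rfl fun i _ => hfac i
      _ = (-1) ^ s * ∏ i : Fin s, (∏ v ∈ B i, x v) ^ 2 := by
            rw [Finset.prod_mul_distrib, Finset.prod_const, Finset.card_univ, Fintype.card_fin]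
      _ = -(∏ i : Fin s, (∏ v ∈ B i, x v) ^ 2) := by rw [hodd.neg_one_pow]; ring
      _ < 0 := by
            have : 0 < ∏ i : Fin s, (∏ v ∈ B i, x v) ^ 2 :=
              Finset.prod_pos fun i _ => pow_two_pos_of_ne_zero (hBne i)
            linarith
  -- P is nonnegative
  have hnn : 0 ≤ P := by
    have h1 : P = ∏ i : Fin s, ∏ v : X, (if v ∈ A i ∪ B i then x v else 1) := by
      rw [hP]
      refine Finset.prod_congr rfl fun i _ => ?_
      rw [← Finset.prod_filter]
      congr 1
      ext v; simp
    rw [h1, Finset.prod_comm]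
    refine Finset.prod_nonneg fun v _ => ?_
    have h2 : ∏ i : Fin s, (if v ∈ A i ∪ B i then x v else 1)
        = x v ^ ((Finset.univ.filter (fun i : Fin s => v ∈ A i ∪ B i)).card) := by
      rw [← Finset.prod_filter, Finset.prod_const]
    rw [h2]
    exact (heven v).pow_nonneg _
  linarith
end

section
/- Let G be a connected triangle-free bipartite simple graph with bipartition of the vertex set into V₁ and V₂, and let M ∈ S(G) satisfy M² = I. Then there exists a real number b such that M(u,u) = b for every u ∈ V₁ and M(v,v) = −b for every v ∈ V₂. -/
/-- `S(G)`: real symmetric matrices whose off-diagonal zero/nonzero pattern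
matches the adjacency of `G`; the diagonal is unconstrained. -/
def Sset {V : Type*} [Fintype V] [DecidableEq V] (G : SimpleGraph V) : Set (Matrix V V ℝ) :=
  {M | M.IsSymm ∧ ∀ u v : V, u ≠ v → (M u v ≠ 0 ↔ G.Adj u v)}

/-- If `G` is a connected triangle-free bipartite graph with bipartition
`V₁`, `V₂ = V₁ᶜ`, and `M ∈ S(G)` satisfies `M² = I`, then there is `b : ℝ` with
`M u u = b` for `u ∈ V₁` and `M v v = -b` for `v ∈ V₂`. -/
theorem stmt_1 {V : Type*} [Fintype V] [DecidableEq V] (G : SimpleGraph V)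
    (hconn : G.Connected) (htf : G.CliqueFree 3)
    (V₁ : Set V) (hbip : ∀ u v : V, G.Adj u v → (u ∈ V₁ ↔ v ∉ V₁))
    (M : Matrix V V ℝ) (hM : M ∈ Sset G) (hM2 : M * M = 1) :
    ∃ b : ℝ, (∀ u ∈ V₁, M u u = b) ∧ (∀ v : V, v ∉ V₁ → M v v = -b) := by
  classical
  obtain ⟨hsym, hpat⟩ := hM
  -- key: adjacent vertices have opposite diagonal entries
  have key : ∀ u v : V, G.Adj u v → M u u = - M v v := by
    intro u v hadj
    have hne : u ≠ v := hadj.ne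
    have h0 : (M * M) u v = 0 := by
      rw [hM2]
      simp [Matrix.one_apply, hne]
    rw [Matrix.mul_apply] at h0
    have hsum : ∑ w : V, M u w * M w v = ∑ w ∈ ({u, v} : Finset V), M u w * M w v := by
      refine (Finset.sum_subset (Finset.subset_univ _) ?_).symm
      intro w _ hw
      simp only [Finset.mem_insert, Finset.mem_singleton, not_or] at hw
      obtain ⟨hwu, hwv⟩ := hw
      by_contra hne0
      have h1 : M u w ≠ 0 := fun h => hne0 (by rw [h, zero_mul])
      have h2 : M w v ≠ 0 := fun h => hne0 (by rw [h, mul_zero])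
      have a1 : G.Adj u w := (hpat u w (Ne.symm hwu)).mp h1
      have a2 : G.Adj w v := (hpat w v hwv).mp h2
      exact htf {u, v, w} (SimpleGraph.is3Clique_triple_iff.mpr ⟨hadj, a1, a2.symm⟩)
    rw [hsum, Finset.sum_pair hne] at h0
    have hMuv : M u v ≠ 0 := (hpat u v hne).mpr hadj
    have : M u v * (M u u + M v v) = 0 := by linear_combination h0
    have h2 := (mul_eq_zero.mp this).resolve_left hMuv
    linarith
  -- the signed diagonal is constant
  set f : V → ℝ := fun x => if x ∈ V₁ then M x x else - M x x with hf
  have step : ∀ u v : V, G.Adj u v → f u = f v := by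
    intro u v hadj
    by_cases hu : u ∈ V₁
    · have hv : v ∉ V₁ := (hbip u v hadj).mp hu
      simp only [hf, if_pos hu, if_neg hv]
      exact key u v hadj
    · have hv : v ∈ V₁ := by
        by_contra hv
        exact hu ((hbip u v hadj).mpr hv)
      simp only [hf, if_neg hu, if_pos hv]
      have := key u v hadj
      linarith
  have const : ∀ u v : V, f u = f v := by
    intro u v
    obtain ⟨p⟩ := hconn.preconnected u v
    induction p with
    | nil => rfl
    | cons h p ih => exact (step _ _ h).trans ih
  have : Nonempty V := hconn.nonempty
  obtain ⟨v₀⟩ := this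
  refine ⟨f v₀, ?_, ?_⟩
  · intro u hu
    have := const u v₀
    simpa [hf, if_pos hu] using this
  · intro v hv
    have := const v v₀
    simp only [hf, if_neg hv] at this
    linarith
end

section
/- Let G be a connected triangle-free non-bipartite simple graph, and let M ∈ S(G) satisfy M² = I. Then M(v,v) = 0 for every vertex v of G. -/
lemma adj_diag_sum {V : Type*} [Fintype V] [DecidableEq V] (G : SimpleGraph V)
    (htf : G.CliqueFree 3) (M : Matrix V V ℝ) (hM : M ∈ Sset G) (hM2 : M * M = 1)
    {u v : V} (hadj : G.Adj u v) : M u u = - M v v := by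
  have huv : u ≠ v := hadj.ne
  have h0 : ∑ w, M u w * M w v = 0 := by
    have h := congrFun (congrFun hM2 u) v
    rw [Matrix.mul_apply] at h
    rw [h, Matrix.one_apply_ne huv]
  have hzero : ∀ w ∈ (Finset.univ : Finset V), w ∉ ({u, v} : Finset V) →
      M u w * M w v = 0 := by
    intro w _ hw
    simp only [Finset.mem_insert, Finset.mem_singleton, not_or] at hw
    by_contra hne
    have h1 : M u w ≠ 0 := fun h => hne (by rw [h, zero_mul])
    have h2 : M w v ≠ 0 := fun h => hne (by rw [h, mul_zero])
    have a1 : G.Adj u w := (hM.2 u w (Ne.symm hw.1)).mp h1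
    have a2 : G.Adj w v := (hM.2 w v hw.2).mp h2
    exact htf {u, w, v} (SimpleGraph.is3Clique_triple_iff.mpr ⟨a1, hadj, a2⟩)
  have hsub : ∑ w ∈ ({u, v} : Finset V), M u w * M w v = ∑ w, M u w * M w v :=
    Finset.sum_subset (Finset.subset_univ _) hzero
  rw [h0, Finset.sum_pair huv] at hsub
  have hMuv : M u v ≠ 0 := (hM.2 u v huv).mpr hadj
  have hfac : M u v * (M u u + M v v) = 0 := by linear_combination hsub
  have := (mul_eq_zero.mp hfac).resolve_left hMuv
  linarith

/-- If `G` is a connected triangle-free non-bipartite graph and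
`M ∈ S(G)` satisfies `M² = I`, then every diagonal entry of `M` is zero. -/
theorem stmt_2 {V : Type*} [Fintype V] [DecidableEq V] (G : SimpleGraph V)
    (hconn : G.Connected) (htf : G.CliqueFree 3) (hnb : ¬ G.Colorable 2)
    (M : Matrix V V ℝ) (hM : M ∈ Sset G) (hM2 : M * M = 1) :
    ∀ v : V, M v v = 0 := by
  intro v
  by_contra hv
  apply hnb
  have key : ∀ a b : V, G.Reachable a b → M a a ≠ 0 → M b b ≠ 0 := by
    intro a b hr
    obtain ⟨p⟩ := hr
    induction p with
    | nil => exact id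
    | cons h p ih =>
      intro ha
      apply ih
      have := adj_diag_sum G htf M hM hM2 h
      intro h0
      rw [h0, neg_zero] at this
      exact ha this
  have hall : ∀ u : V, M u u ≠ 0 := fun u => key v u (hconn.preconnected v u) hv
  refine ⟨SimpleGraph.Coloring.mk (fun u => if 0 < M u u then (0 : Fin 2) else 1) ?_⟩
  intro a b hab
  have h1 := adj_diag_sum G htf M hM hM2 hab
  have ha := hall a
  have hb := hall b
  rcases lt_or_gt_of_ne ha with h | h
  · have hb' : 0 < M b b := by linarith
    simp [h.not_gt, hb']
  · have hb' : ¬ 0 < M b b := by intro hh; linarith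
    simp [h, hb']
end

section
/- Let G be a connected triangle-free non-bipartite simple graph on an odd number of vertices. Then every matrix M ∈ S(G) has at least 3 distinct eigenvalues; that is, q(G) ≥ 3. -/
/-- `q(G)`: the minimum number of distinct eigenvalues over matrices in `S(G)`. -/
noncomputable def minQ {V : Type*} [Fintype V] [DecidableEq V] (G : SimpleGraph V) : ℕ :=
  sInf {k : ℕ | ∃ M ∈ Sset G, (spectrum ℝ M).ncard = k}

/-! If `M ∈ S(G)` had at most two eigenvalues `a ≠ b`, then `(M - a)(M - b) = 0`. Since `G` is
triangle-free, `(M²)ᵤᵥ = (Mᵤᵤ + Mᵥᵥ) Mᵤᵥ` for every edge `uv`, so `Mᵤᵤ + Mᵥᵥ = a + b` along edges: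
`d = diag M - (a + b) / 2` changes sign along every edge. If `d` had no zero, its sign would
2-colour `G`; so `d` vanishes somewhere, hence everywhere by connectivity, and
`tr M = n (a + b) / 2`. Comparing with the sum of the eigenvalues, `a` and `b` have equal
multiplicity, so `n` is even. -/

theorem Matrix.IsHermitian.sub_smul_one_mul_sub_smul_one_eq_zero {n 𝕜 : Type*} [Fintype n]
    [DecidableEq n] [RCLike 𝕜] {A : Matrix n n 𝕜} (hA : A.IsHermitian) {a b : ℝ}
    (h : ∀ i, hA.eigenvalues i = a ∨ hA.eigenvalues i = b) :
    (A - (a : 𝕜) • 1) * (A - (b : 𝕜) • 1) = 0 := by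
  rw [hA.spectral_theorem, ← map_one (Unitary.conjStarAlgAut 𝕜 _ hA.eigenvectorUnitary),
    ← map_smul, ← map_smul, ← map_sub, ← map_sub, ← map_mul, EmbeddingLike.map_eq_zero_iff,
    smul_one_eq_diagonal, smul_one_eq_diagonal, diagonal_sub, diagonal_sub,
    diagonal_mul_diagonal]
  ext i j
  rcases h i with hi | hi <;> simp [hi, diagonal_apply]

theorem Set.Finite.exists_ne_subset_pair_of_ncard_le_two {α : Type*} [Nontrivial α] {s : Set α}
    (hs : s.Finite) (h : s.ncard ≤ 2) : ∃ a b, a ≠ b ∧ s ⊆ {a, b} := by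
  interval_cases hcard : s.ncard
  · obtain ⟨a, b, hab⟩ := exists_pair_ne α
    exact ⟨a, b, hab, by simp [(Set.ncard_eq_zero hs).mp hcard]⟩
  · obtain ⟨a, rfl⟩ := Set.ncard_eq_one.mp hcard
    obtain ⟨b, hb⟩ := exists_ne a
    exact ⟨a, b, hb.symm, by simp⟩
  · obtain ⟨a, b, hab, rfl⟩ := Set.ncard_eq_two.mp hcard
    exact ⟨a, b, hab, subset_rfl⟩

theorem Fintype.even_card_of_sum_eq_card_mul_midpoint {ι K : Type*} [Fintype ι] [Field K]
    [CharZero K] {f : ι → K} {a b : K} (hab : a ≠ b) (hf : ∀ i, f i = a ∨ f i = b)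
    (hsum : ∑ i, f i = Fintype.card ι * ((a + b) / 2)) : Even (Fintype.card ι) := by
  classical
  set k := (Finset.univ.filter (fun i => f i = a)).card
  set l := (Finset.univ.filter (fun i => f i ≠ a)).card
  have hkl : k + l = Fintype.card ι := Finset.card_filter_add_card_filter_not _
  have hf' : ∀ i, f i = if f i = a then a else b := fun i => by
    rcases hf i with h | h <;> simp [h, hab.symm]
  have hsplit : ∑ i, f i = k * a + l * b := by
    rw [Finset.sum_congr rfl fun i _ => hf' i, Finset.sum_ite]
    simp [k, l]
  rw [hsplit, ← hkl] at hsum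
  have : ((k : K) - l) * (a - b) = 0 := by push_cast at hsum; linear_combination 2 * hsum
  have hkl' : k = l := by
    exact_mod_cast sub_eq_zero.mp ((mul_eq_zero.mp this).resolve_right (sub_ne_zero.mpr hab))
  exact ⟨k, by omega⟩

namespace SimpleGraph

variable {V α : Type*} {G : SimpleGraph V} {f : V → α}

theorem Reachable.eq_zero_of_forall_adj_neg [NegZeroClass α] {u v : V} (huv : G.Reachable u v)
    (hf : ∀ x y, G.Adj x y → f y = -f x) (hu : f u = 0) : f v = 0 := by
  obtain ⟨p⟩ := huv
  induction p with
  | nil => exact hu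
  | cons hxy _ ih => exact ih (by rw [hf _ _ hxy, hu, neg_zero])

theorem colorable_two_of_forall_adj_neg [AddCommGroup α] [LinearOrder α] [IsOrderedAddMonoid α]
    (hf : ∀ x y, G.Adj x y → f y = -f x) (hf0 : ∀ x, f x ≠ 0) : G.Colorable 2 :=
  (Coloring.mk (fun x => decide (0 < f x)) fun {x y} hxy hcol => by
    have hy := hf x y hxy
    rcases (hf0 x).lt_or_gt with hx | hx
    · have : 0 < f y := by rw [hy]; exact neg_pos.mpr hx
      simp [hx.not_gt, this] at hcol
    · have : f y < 0 := by rw [hy]; exact neg_neg_iff_pos.mpr hx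
      simp [hx, this.not_gt] at hcol).colorable

theorem Connected.eq_zero_of_forall_adj_neg_of_not_colorable [AddCommGroup α] [LinearOrder α]
    [IsOrderedAddMonoid α] (hG : G.Connected) (hnb : ¬ G.Colorable 2)
    (hf : ∀ x y, G.Adj x y → f y = -f x) (v : V) : f v = 0 := by
  obtain ⟨u, hu⟩ : ∃ u, f u = 0 := by
    by_contra! hf0
    exact hnb (colorable_two_of_forall_adj_neg hf hf0)
  exact (hG.preconnected u v).eq_zero_of_forall_adj_neg hf hu

theorem adjMatrix_mem_Sset [Fintype V] [DecidableEq V] [DecidableRel G.Adj] :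
    G.adjMatrix ℝ ∈ Sset G :=
  ⟨G.isSymm_adjMatrix, fun u v _ => by by_cases h : G.Adj u v <;> simp [h]⟩

end SimpleGraph

namespace Sset

variable {V : Type*} [Fintype V] [DecidableEq V] {G : SimpleGraph V} {M : Matrix V V ℝ}

theorem mul_self_apply_of_adj (hG : G.CliqueFree 3) (hM : M ∈ Sset G) {u v : V}
    (huv : G.Adj u v) : (M * M) u v = (M u u + M v v) * M u v := by
  have hpath : ∀ w ∉ ({u, v} : Finset V), M u w * M w v = 0 := by
    intro w hw
    simp only [Finset.mem_insert, Finset.mem_singleton, not_or] at hw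
    by_contra! h
    have huw : G.Adj u w := (hM.2 u w (Ne.symm hw.1)).mp (left_ne_zero_of_mul h)
    have hwv : G.Adj w v := (hM.2 w v hw.2).mp (right_ne_zero_of_mul h)
    exact hG {u, v, w} (SimpleGraph.is3Clique_triple_iff.mpr ⟨huv, huw, hwv.symm⟩)
  rw [Matrix.mul_apply, ← Finset.sum_subset (Finset.subset_univ _) fun w _ hw => hpath w hw,
    Finset.sum_pair huv.ne]
  ring

theorem diag_add_diag_of_adj (hG : G.CliqueFree 3) (hM : M ∈ Sset G) {a b : ℝ}
    (hab : (M - a • 1) * (M - b • 1) = 0) {u v : V} (huv : G.Adj u v) :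
    M u u + M v v = a + b := by
  have hquad : (M * M) u v = (a + b) * M u v := by
    have := congrFun₂ hab u v
    simp [sub_mul, mul_sub, Matrix.one_apply_ne huv.ne] at this
    linear_combination this
  exact mul_right_cancel₀ ((hM.2 u v huv.ne).mpr huv)
    ((mul_self_apply_of_adj hG hM huv).symm.trans hquad)

theorem three_le_ncard_spectrum (hconn : G.Connected) (htf : G.CliqueFree 3)
    (hnb : ¬ G.Colorable 2) (hodd : Odd (Fintype.card V)) (hM : M ∈ Sset G) :
    3 ≤ (spectrum ℝ M).ncard := by
  by_contra! hlt
  have hH : M.IsHermitian := hM.1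
  have hspec := hH.spectrum_real_eq_range_eigenvalues
  obtain ⟨a, b, hab, hsub⟩ := (hspec ▸ Set.finite_range _ : (spectrum ℝ M).Finite)
    |>.exists_ne_subset_pair_of_ncard_le_two (by omega)
  have hev : ∀ i, hH.eigenvalues i = a ∨ hH.eigenvalues i = b := fun i =>
    hsub (hspec ▸ Set.mem_range_self i)
  have hquad : (M - a • 1) * (M - b • 1) = 0 := hH.sub_smul_one_mul_sub_smul_one_eq_zero hev
  have hdiag (v : V) : M v v = (a + b) / 2 := sub_eq_zero.mp <|
    hconn.eq_zero_of_forall_adj_neg_of_not_colorable (f := fun w => M w w - (a + b) / 2) hnb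
      (fun x y hxy => by linarith [diag_add_diag_of_adj htf hM hquad hxy]) v
  have htrace : ∑ i, hH.eigenvalues i = Fintype.card V * ((a + b) / 2) :=
    calc ∑ i, hH.eigenvalues i = M.trace := hH.trace_eq_sum_eigenvalues.symm
      _ = ∑ _ : V, (a + b) / 2 := Finset.sum_congr rfl fun v _ => hdiag v
      _ = Fintype.card V * ((a + b) / 2) := by simp
  exact Nat.not_even_iff_odd.mpr hodd (Fintype.even_card_of_sum_eq_card_mul_midpoint hab hev htrace)

end Sset

/-- If `G` is a connected triangle-free non-bipartite graph of odd order,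
then every `M ∈ S(G)` has at least `3` distinct eigenvalues; that is, `q(G) ≥ 3`. -/
theorem stmt_3 {V : Type*} [Fintype V] [DecidableEq V] (G : SimpleGraph V)
    (hconn : G.Connected) (htf : G.CliqueFree 3) (hnb : ¬ G.Colorable 2)
    (hodd : Odd (Fintype.card V)) :
    (∀ M ∈ Sset G, 3 ≤ (spectrum ℝ M).ncard) ∧ 3 ≤ minQ G := by
  have key : ∀ M ∈ Sset G, 3 ≤ (spectrum ℝ M).ncard := fun M hM =>
    Sset.three_le_ncard_spectrum hconn htf hnb hodd hM
  classical
  refine ⟨key, le_csInf ⟨_, _, G.adjMatrix_mem_Sset, rfl⟩ ?_⟩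
  rintro k ⟨M, hM, rfl⟩
  exact key M hM
end

section
/- Let G be a strongly regular graph with parameters (n, k, 0, μ), where n ≥ 5 is odd and μ ≥ 1. Then q(G) = 3: every matrix M ∈ S(G) has at least 3 distinct eigenvalues, and there exists a matrix in S(G) (for instance the adjacency matrix of G) with exactly 3 distinct eigenvalues. -/
/-!
Lower bound: if `M ∈ S(G)` had only two eigenvalues `a, b`, then `(M - a)(M - b) = 0`. Reading
this identity at an edge `uv` of the triangle-free graph `G` gives `M_uu + M_vv = a + b`, and
summing over the edges of the `k`-regular graph gives `2 tr M = n (a + b)`. As `tr M` is a sum of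
`n` terms each equal to `a` or `b` and `n` is odd, this forces `a = b`, so `M` is scalar, which
is impossible since `G` has edges.

Upper bound: with `A` the adjacency matrix and `J` the all-ones matrix, the strongly regular
identity reads `A² + μA + (μ - k)I = μJ`, and `AJ = kJ`; hence `A` is annihilated by the cubic
`(X - k)(X² + μX + μ - k)` and has at most three eigenvalues.
-/

open Matrix Polynomial

lemma Set.exists_subset_pair_of_ncard_lt_three {α : Type*} [Nonempty α] {s : Set α}
    (hs : s.Finite) (h : s.ncard < 3) : ∃ a b, s ⊆ {a, b} := by
  interval_cases hcard : s.ncard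
  · rw [Set.ncard_eq_zero hs] at hcard
    exact ⟨Classical.arbitrary α, Classical.arbitrary α, hcard ▸ Set.empty_subset _⟩
  · obtain ⟨a, rfl⟩ := Set.ncard_eq_one.1 hcard
    exact ⟨a, a, by simp⟩
  · obtain ⟨a, b, -, rfl⟩ := Set.ncard_eq_two.1 hcard
    exact ⟨a, b, subset_rfl⟩

lemma eq_of_two_mul_sum_eq_card_mul {ι : Type*} [Fintype ι] (hodd : Odd (Fintype.card ι))
    {f : ι → ℝ} {a b : ℝ} (hf : ∀ i, f i = a ∨ f i = b)
    (hsum : 2 * ∑ i, f i = Fintype.card ι * (a + b)) : a = b := by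
  classical
  set p := (Finset.univ.filter fun i ↦ f i = a).card
  set q := (Finset.univ.filter fun i ↦ f i ≠ a).card
  have hpq : p + q = Fintype.card ι := Finset.card_filter_add_card_filter_not _
  have hsplit : ∑ i, f i = p * a + q * b := by
    rw [← Finset.sum_filter_add_sum_filter_not Finset.univ fun i ↦ f i = a,
      Finset.sum_congr rfl fun i hi ↦ (Finset.mem_filter.1 hi).2,
      Finset.sum_congr rfl fun i hi ↦ (hf i).resolve_left (Finset.mem_filter.1 hi).2]
    simp [p, q]
  have hpq_ne : (p : ℝ) ≠ q := by
    norm_cast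
    intro h
    exact Nat.not_even_iff_odd.2 hodd (hpq ▸ h ▸ Even.add_self q)
  rw [hsplit, ← hpq] at hsum
  push_cast at hsum
  have : ((p : ℝ) - q) * (a - b) = 0 := by linear_combination hsum
  exact sub_eq_zero.1 ((mul_eq_zero.1 this).resolve_left (sub_ne_zero.2 hpq_ne))

lemma spectrum_ncard_le_natDegree {𝕜 A : Type*} [Field 𝕜] [Ring A] [Algebra 𝕜 A] [Nontrivial A]
    {a : A} {p : 𝕜[X]} (hp0 : p ≠ 0) (hp : aeval a p = 0) :
    (spectrum 𝕜 a).ncard ≤ p.natDegree := by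
  refine le_trans (Set.ncard_le_ncard (fun x hx ↦ ?_) (p.rootSet_finite 𝕜)) (p.ncard_rootSet_le 𝕜)
  have := spectrum.subset_polynomial_aeval a p ⟨x, hx, rfl⟩
  rw [hp, spectrum.zero_eq, Set.mem_singleton_iff] at this
  exact (mem_rootSet_of_ne hp0).2 (by simpa using this)

lemma sub_algebraMap_mul_sub_algebraMap_eq_zero {R A : Type*} {p : A → Prop} [CommRing R]
    [StarRing R] [MetricSpace R] [IsTopologicalRing R] [ContinuousStar R] [TopologicalSpace A]
    [Ring A] [StarRing A] [Algebra R A] [ContinuousFunctionalCalculus R A p]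
    {a : A} (ha : p a) {r s : R} (h : spectrum R a ⊆ {r, s}) :
    (a - algebraMap R A r) * (a - algebraMap R A s) = 0 := by
  have hq := cfc_polynomial ((X - C r) * (X - C s)) a
  rw [cfc_congr (g := 0) fun x hx ↦ ?_, cfc_zero] at hq
  · simpa using hq.symm
  · rcases h hx with rfl | rfl <;> simp

namespace SimpleGraph

variable {V : Type*} [Fintype V] {G : SimpleGraph V} [DecidableRel G.Adj]

lemma IsRegularOfDegree.two_mul_sum_eq {k : ℕ} (hG : G.IsRegularOfDegree k) (hk : 0 < k)
    {d : V → ℝ} {c : ℝ} (h : ∀ u v, G.Adj u v → d u + d v = c) :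
    2 * ∑ u, d u = Fintype.card V * c := by
  have hdeg (f : V → ℝ) : ∑ u, ∑ v with G.Adj u v, f u = k * ∑ u, f u := by
    simp [Finset.mul_sum, G.neighborFinset_eq_filter.symm, hG _]
  have hswap : ∑ u, ∑ v with G.Adj u v, d v = ∑ u, ∑ v with G.Adj u v, d u := by
    simp only [Finset.sum_filter]
    rw [Finset.sum_comm]
    simp only [G.adj_comm]
  have hsum : ∑ u, ∑ v with G.Adj u v, (d u + d v) = ∑ u, ∑ v with G.Adj u v, c :=
    Finset.sum_congr rfl fun u _ ↦ Finset.sum_congr rfl fun v hv ↦ h u v (Finset.mem_filter.1 hv).2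
  rw [Finset.sum_congr rfl fun u _ ↦ Finset.sum_add_distrib, Finset.sum_add_distrib, hswap,
    hdeg d, hdeg fun _ ↦ c] at hsum
  have hk' : (k : ℝ) ≠ 0 := by exact_mod_cast hk.ne'
  apply mul_left_cancel₀ hk'
  simp only [Finset.sum_const, Finset.card_univ, nsmul_eq_mul] at hsum
  linear_combination hsum

lemma IsRegularOfDegree.adjMatrix_mul_of_one {α : Type*} [NonAssocSemiring α] {k : ℕ}
    (h : G.IsRegularOfDegree k) : G.adjMatrix α * of 1 = k • of 1 := by
  ext u v
  simp [adjMatrix_mul_apply, h u]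

variable {n k ℓ μ : ℕ}

lemma IsSRGWith.cliqueFree_three (h : G.IsSRGWith n k 0 μ) : G.CliqueFree 3 := by
  classical
  intro s hs
  obtain ⟨u, v, w, huv, huw, hvw, -⟩ := is3Clique_iff.1 hs
  have := h.of_adj u v huv
  rw [Fintype.card_eq_zero_iff] at this
  exact this.false ⟨w, huw, hvw⟩

lemma IsSRGWith.degree_pos (h : G.IsSRGWith n k ℓ μ) (hn : 1 < n) (hμ : 0 < μ) : 0 < k := by
  obtain ⟨u, v, huv⟩ := Fintype.exists_pair_of_one_lt_card (h.card ▸ hn)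
  by_contra! hk
  have hnadj (w x : V) : ¬ G.Adj w x := fun hwx ↦
    (G.degree_pos_iff_exists_adj w).2 ⟨x, hwx⟩ |>.ne' (h.regular w ▸ Nat.le_zero.1 hk)
  have := h.of_not_adj huv (hnadj u v)
  rw [Fintype.card_eq_zero_iff.2 ⟨fun ⟨w, hw, _⟩ ↦ hnadj u w hw⟩] at this
  omega

lemma IsSRGWith.aeval_adjMatrix_eq_zero [DecidableEq V] {α : Type*} [CommRing α]
    (h : G.IsSRGWith n k ℓ μ) :
    aeval (G.adjMatrix α) ((X - C (k : α)) * (X ^ 2 + C ((μ : α) - ℓ) * X + C ((μ : α) - k))) =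
      0 := by
  classical
  have hJ := G.one_add_adjMatrix_add_compl_adjMatrix_eq_of_one (α := α)
  rw [compl_adjMatrix_eq_adjMatrix_compl] at hJ
  have hquad :
      aeval (G.adjMatrix α) (X ^ 2 + C ((μ : α) - ℓ) * X + C ((μ : α) - k)) = μ • of 1 := by
    simp only [map_add, map_mul, map_pow, aeval_X, aeval_C, ← Algebra.smul_def]
    rw [Algebra.algebraMap_eq_smul_one, h.matrix_eq, ← hJ]
    simp only [← Nat.cast_smul_eq_nsmul α]
    module
  rw [map_mul, hquad, map_sub, aeval_X, aeval_C, Algebra.algebraMap_eq_smul_one, sub_mul,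
    mul_smul_comm, mul_smul_comm, h.regular.adjMatrix_mul_of_one, smul_mul_assoc, Matrix.one_mul,
    Nat.cast_smul_eq_nsmul, sub_self]

lemma IsSRGWith.ncard_spectrum_adjMatrix_le [DecidableEq V] [Nonempty V]
    (h : G.IsSRGWith n k ℓ μ) : (spectrum ℝ (G.adjMatrix ℝ)).ncard ≤ 3 := by
  have hmonic : ((X - C (k : ℝ)) * (X ^ 2 + C ((μ : ℝ) - ℓ) * X + C ((μ : ℝ) - k))).Monic := by
    monicity!
  refine (spectrum_ncard_le_natDegree hmonic.ne_zero h.aeval_adjMatrix_eq_zero).trans ?_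
  compute_degree!

end SimpleGraph

section Sset

variable {V : Type*} [Fintype V] [DecidableEq V] {G : SimpleGraph V} {M : Matrix V V ℝ}

lemma adj_of_mem_Sset (hM : M ∈ Sset G) {u v : V} (huv : u ≠ v) (h : M u v ≠ 0) : G.Adj u v :=
  (hM.2 u v huv).1 h

lemma apply_ne_zero_of_mem_Sset (hM : M ∈ Sset G) {u v : V} (huv : G.Adj u v) : M u v ≠ 0 :=
  (hM.2 u v huv.ne).2 huv

lemma mul_self_apply_of_adj (hM : M ∈ Sset G) (hG : G.CliqueFree 3) {u v : V} (huv : G.Adj u v) :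
    (M * M) u v = (M u u + M v v) * M u v := by
  rw [mul_apply, Fintype.sum_eq_add u v huv.ne fun w ⟨hwu, hwv⟩ ↦ ?_, hM.1.apply v u]
  · ring
  by_contra! h
  refine hG {u, v, w} (SimpleGraph.is3Clique_triple_iff.2 ⟨huv, ?_, ?_⟩)
  · exact adj_of_mem_Sset hM hwu.symm (left_ne_zero_of_mul h)
  · exact (adj_of_mem_Sset hM hwv (right_ne_zero_of_mul h)).symm

lemma diag_add_diag_eq_of_adj (hM : M ∈ Sset G) (hG : G.CliqueFree 3) {a b : ℝ}
    (hab : (M - algebraMap ℝ _ a) * (M - algebraMap ℝ _ b) = 0) {u v : V} (huv : G.Adj u v) :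
    M u u + M v v = a + b := by
  have h := congrFun₂ hab u v
  simp only [Algebra.algebraMap_eq_smul_one, sub_mul, mul_sub, Matrix.smul_mul, Matrix.mul_smul,
    Matrix.one_mul, Matrix.mul_one, Matrix.sub_apply, Matrix.smul_apply, one_apply_ne huv.ne,
    Matrix.zero_apply, mul_self_apply_of_adj hM hG huv, smul_eq_mul, mul_zero] at h
  apply mul_right_cancel₀ (apply_ne_zero_of_mem_Sset hM huv)
  linear_combination h

lemma adjMatrix_mem_Sset [DecidableRel G.Adj] : G.adjMatrix ℝ ∈ Sset G :=
  ⟨G.isSymm_adjMatrix, fun u v _ ↦ by by_cases h : G.Adj u v <;> simp [h]⟩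

lemma minQ_eq {m : ℕ} (hlow : ∀ M ∈ Sset G, m ≤ (spectrum ℝ M).ncard) (hM : M ∈ Sset G)
    (hm : (spectrum ℝ M).ncard = m) : minQ G = m :=
  le_antisymm (Nat.sInf_le ⟨M, hM, hm⟩)
    (le_csInf ⟨m, M, hM, hm⟩ fun _ ⟨N, hN, hNm⟩ ↦ hNm ▸ hlow N hN)

theorem three_le_ncard_spectrum_of_mem_Sset [DecidableRel G.Adj] {k : ℕ} (hG : G.CliqueFree 3)
    (hreg : G.IsRegularOfDegree k) (hk : 0 < k) (hodd : Odd (Fintype.card V))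
    (hM : M ∈ Sset G) : 3 ≤ (spectrum ℝ M).ncard := by
  by_contra! hlt
  obtain ⟨a, b, hab⟩ := Set.exists_subset_pair_of_ncard_lt_three M.finite_spectrum hlt
  have hH : M.IsHermitian := isHermitian_iff_isSymm.2 hM.1
  have hdiag : ∀ u v, G.Adj u v → M u u + M v v = a + b := fun u v ↦
    diag_add_diag_eq_of_adj hM hG (sub_algebraMap_mul_sub_algebraMap_eq_zero hH.isSelfAdjoint hab)
  have htrace : 2 * ∑ i, hH.eigenvalues i = Fintype.card V * (a + b) := by
    have h := hH.trace_eq_sum_eigenvalues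
    simp only [RCLike.ofReal_real_eq_id, id] at h
    exact h ▸ hreg.two_mul_sum_eq hk hdiag
  obtain rfl : a = b := eq_of_two_mul_sum_eq_card_mul hodd
    (fun i ↦ hab (hH.eigenvalues_mem_spectrum_real i)) htrace
  have hscalar := CFC.eq_algebraMap_of_spectrum_subset_singleton M a (by simpa using hab)
    hH.isSelfAdjoint
  obtain ⟨u⟩ : Nonempty V := Fintype.card_pos_iff.1 hodd.pos
  obtain ⟨v, huv⟩ := (G.degree_pos_iff_exists_adj u).1 (hreg u ▸ hk)
  refine apply_ne_zero_of_mem_Sset hM huv ?_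
  rw [hscalar, Algebra.algebraMap_eq_smul_one, Matrix.smul_apply, one_apply_ne huv.ne, smul_zero]

end Sset

/-- If `G` is a strongly regular graph with parameters `(n, k, 0, μ)`
where `n ≥ 5` is odd and `μ ≥ 1`, then `q(G) = 3`: every `M ∈ S(G)` has at least `3`
distinct eigenvalues, and the adjacency matrix of `G` lies in `S(G)` and has exactly `3`
distinct eigenvalues. -/
theorem stmt_4 {V : Type*} [Fintype V] [DecidableEq V] (G : SimpleGraph V)
    [DecidableRel G.Adj] (n k μ : ℕ) (hsrg : G.IsSRGWith n k 0 μ)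
    (hn : 5 ≤ n) (hodd : Odd n) (hμ : 1 ≤ μ) :
    (∀ M ∈ Sset G, 3 ≤ (spectrum ℝ M).ncard) ∧
    G.adjMatrix ℝ ∈ Sset G ∧ (spectrum ℝ (G.adjMatrix ℝ)).ncard = 3 ∧
    minQ G = 3 := by
  have hcard : Fintype.card V = n := hsrg.card
  have : Nonempty V := Fintype.card_pos_iff.1 (by omega)
  have hk : 0 < k := hsrg.degree_pos (by omega) hμ
  have hlow : ∀ M ∈ Sset G, 3 ≤ (spectrum ℝ M).ncard := fun _ hM ↦
    three_le_ncard_spectrum_of_mem_Sset hsrg.cliqueFree_three hsrg.regular hk (hcard ▸ hodd) hM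
  have hadj : (spectrum ℝ (G.adjMatrix ℝ)).ncard = 3 :=
    le_antisymm hsrg.ncard_spectrum_adjMatrix_le (hlow _ adjMatrix_mem_Sset)
  exact ⟨hlow, adjMatrix_mem_Sset, hadj, minQ_eq hlow adjMatrix_mem_Sset hadj⟩
end

section
/- Let n, d ∈ ℕ with d ≥ 1 and n ≥ d + 1, and let A = A_{n,d} be the signed adjacency matrix of the Johnson graph J(n,d). Then A² = (n − 2d)·A + d(n − d)·I, and the rank of A + d·I equals C(n−1, d−1). Consequently the eigenvalues of A are −d with multiplicity C(n−1, d) and n − d with multiplicity C(n−1, d−1); in particular A is a matrix in S(J(n,d)) with entries in {0, 1, −1} having exactly two distinct eigenvalues, so q(J(n,d)) = 2. -/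
open Matrix Polynomial

/-- The Johnson graph `J(n,d)`: vertices are the `d`-element subsets of an `n`-set,
adjacent iff their symmetric difference has two elements. -/
def Johnson (n d : ℕ) : SimpleGraph {s : Finset (Fin n) // s.card = d} where
  Adj α β := (symmDiff α.1 β.1).card = 2
  symm := ⟨fun a b h => by rwa [symmDiff_comm]⟩
  loopless := ⟨fun a h => by simp [symmDiff_self] at h⟩

/-- For `d`-subsets `α, β` with `α ∆ β = {i, j}`, `i < j`, this is
`h(α,β) = |{ℓ ∈ α ∩ β : i < ℓ < j}|`. -/
def hjExp {n : ℕ} (α β : Finset (Fin n)) : ℕ :=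
  ((α ∩ β).filter (fun l => (∃ i ∈ symmDiff α β, i < l) ∧ ∃ j ∈ symmDiff α β, l < j)).card

/-- The signed adjacency matrix `A_{n,d}` of the Johnson graph `J(n,d)`:
`A(α,β) = (-1)^{h(α,β)}` when `|α ∆ β| = 2` and `0` otherwise. -/
def Ajohnson (n d : ℕ) :
    Matrix {s : Finset (Fin n) // s.card = d} {s : Finset (Fin n) // s.card = d} ℝ :=
  fun α β => if (symmDiff α.1 β.1).card = 2 then (-1 : ℝ) ^ hjExp α.1 β.1 else 0

/-- The matrix `W_{n,d}`, rows indexed by `d`-subsets and columns by `(d+1)`-subsets of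
an `n`-set: `W(α,β) = (-1)^{|{y ∈ β : y < x}|}` when `α ⊆ β` with `β \ α = {x}`, else `0`. -/
def Wj (n d : ℕ) :
    Matrix {s : Finset (Fin n) // s.card = d} {s : Finset (Fin n) // s.card = d + 1} ℝ :=
  fun α β => if α.1 ⊆ β.1 then
      (-1 : ℝ) ^ ((β.1.filter (fun y => ∃ x ∈ β.1 \ α.1, y < x)).card)
    else 0

/-- `P_{n,d} := W_{n,d} · W_{n,d}ᵀ`. -/
noncomputable def Pj (n d : ℕ) := Wj n d * (Wj n d)ᵀ

/-!
Let `W = Wj n (d - 1)` and `W' = Wj n d` be the signed inclusion matrices between consecutive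
layers of subsets (boundary maps of the exterior algebra). Comparing entries, `WᵀW = A + d I` and
`W'W'ᵀ = (n - d) I - A`, while `W W' = 0` because the two chains `γ ⊂ γ + u ⊂ γ + u + v` and
`γ ⊂ γ + v ⊂ γ + u + v` carry opposite signs. Hence `M = A + d I` satisfies
`M (n I - M) = Wᵀ (W W') W'ᵀ = 0`, which is the quadratic relation for `A`.

Every eigenvalue of the symmetric matrix `A` is therefore `-d` or `n - d`, and since `tr A = 0`
the multiplicity `k` of `n - d` satisfies `k n = d C(n, d)`, i.e. `k = C(n-1, d-1)`. This gives the
characteristic polynomial, the rank of `A + d I` and exactly two distinct eigenvalues. Conversely,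
a symmetric matrix with a single eigenvalue is scalar, so it cannot have the off-diagonal pattern
of a graph with an edge.
-/

open Finset

section SignBelow

variable {ι : Type*} [LinearOrder ι]

def signBelow (s : Finset ι) (x : ι) : ℝ := (-1) ^ #(s.filter (· < x))

lemma signBelow_insert {s : Finset ι} {a : ι} (ha : a ∉ s) (x : ι) :
    signBelow (insert a s) x = (if a < x then -1 else 1) * signBelow s x := by
  unfold signBelow
  rw [filter_insert]
  split_ifs
  · rw [card_insert_of_notMem fun h => ha (mem_filter.mp h).1, pow_succ, mul_comm]
  · rw [one_mul]

/-- Elements of `s` below both `u` and `v` are counted twice on the left, so only those strictly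
between `u` and `v` contribute to the sign. -/
lemma signBelow_mul_signBelow {s : Finset ι} {u v : ι} (hu : u ∉ s) (hv : v ∉ s) :
    signBelow s u * signBelow s v =
      (-1) ^ #(s.filter fun l => (u < l ∨ v < l) ∧ (l < u ∨ l < v)) := by
  have hcount : #(s.filter (· < u)) + #(s.filter (· < v)) =
      2 * #(s.filter fun l => l < u ∧ l < v) +
        #(s.filter fun l => (u < l ∨ v < l) ∧ (l < u ∨ l < v)) := by
    simp only [card_filter, mul_sum, ← sum_add_distrib]
    refine sum_congr rfl fun l hl => ?_
    rcases (ne_of_mem_of_not_mem hl hu).lt_or_gt with h₁ | h₁ <;>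
      rcases (ne_of_mem_of_not_mem hl hv).lt_or_gt with h₂ | h₂ <;>
      simp [h₁, h₂, h₁.not_gt, h₂.not_gt]
  rw [signBelow, signBelow, ← pow_add, hcount, pow_add, pow_mul, neg_one_sq, one_pow, one_mul]

lemma ite_lt_mul_ite_lt {u v : ι} (huv : u ≠ v) :
    ((if u < v then -1 else 1) * if v < u then -1 else 1 : ℝ) = -1 := by
  rcases huv.lt_or_gt with h | h <;> simp [h, h.not_gt]

lemma ite_lt_add_ite_lt {u v : ι} (huv : u ≠ v) :
    ((if u < v then -1 else 1) + if v < u then -1 else 1 : ℝ) = 0 := by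
  rcases huv.lt_or_gt with h | h <;> simp [h, h.not_gt]

end SignBelow

section Slices

variable {ι : Type*} [DecidableEq ι]

lemma card_symmDiff_of_card_eq {α β : Finset ι} {k : ℕ} (hα : #α = k) (hβ : #β = k) :
    #(symmDiff α β) = 2 * (k - #(α ∩ β)) := by
  have h₁ := card_inter_add_card_sdiff α β
  have h₂ := card_inter_add_card_sdiff β α
  rw [symmDiff_def, sup_eq_union, card_union_of_disjoint disjoint_sdiff_sdiff]
  rw [inter_comm] at h₂
  omega

lemma card_inter_lt_of_ne {α β : Finset ι} {k : ℕ} (hα : #α = k) (hβ : #β = k) (hne : α ≠ β) :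
    #(α ∩ β) < k := by
  refine hα ▸ card_lt_card (Finset.ssubset_iff_subset_ne.mpr ⟨inter_subset_left, fun h => hne ?_⟩)
  exact eq_of_subset_of_card_le (h ▸ inter_subset_right) (by omega)

lemma symmDiff_insert_insert {s : Finset ι} {u v : ι} (hu : u ∉ s) (hv : v ∉ s) (huv : u ≠ v) :
    symmDiff (insert u s) (insert v s) = {u, v} := by
  ext a
  simp only [mem_symmDiff, mem_insert, mem_singleton]
  constructor
  · rintro (⟨h | h, h'⟩ | ⟨h | h, h'⟩) <;> simp_all
  · rintro (rfl | rfl) <;> simp_all [Ne.symm huv]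

lemma exists_eq_insert_of_card_symmDiff_eq_two {α β : Finset ι} (hcard : #α = #β)
    (h : #(symmDiff α β) = 2) :
    ∃ u v, u ∉ α ∩ β ∧ v ∉ α ∩ β ∧ u ≠ v ∧ α = insert u (α ∩ β) ∧ β = insert v (α ∩ β) := by
  have hsd := card_symmDiff_of_card_eq hcard rfl
  obtain ⟨u, hu, hαu⟩ :=
    exists_eq_insert_iff.mpr ⟨inter_subset_left (s₁ := α) (s₂ := β), by omega⟩
  obtain ⟨v, hv, hβv⟩ :=
    exists_eq_insert_iff.mpr ⟨inter_subset_right (s₁ := α) (s₂ := β), by omega⟩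
  refine ⟨u, v, hu, hv, ?_, hαu.symm, hβv.symm⟩
  rintro rfl
  exact hu (mem_inter.mpr ⟨hαu ▸ mem_insert_self u _, hβv ▸ mem_insert_self u _⟩)

lemma exists_eq_insert_insert_of_subset {γ δ : Finset ι} (h : γ ⊆ δ) (hcard : #δ = #γ + 2) :
    ∃ u v, u ∉ γ ∧ v ∉ γ ∧ u ≠ v ∧ δ = insert u (insert v γ) := by
  obtain ⟨u, v, huv, hpair⟩ :=
    card_eq_two.mp (by rw [card_sdiff_of_subset h]; omega : #(δ \ γ) = 2)
  have hu := mem_sdiff.mp (hpair ▸ mem_insert_self u {v})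
  have hv := mem_sdiff.mp (hpair ▸ mem_insert_of_mem (mem_singleton_self v))
  refine ⟨u, v, hu.2, hv.2, huv, ?_⟩
  rw [← union_sdiff_of_subset h, hpair, union_comm, insert_eq, insert_eq, union_assoc]
  rfl

variable [Fintype ι]

lemma card_filter_subset_eq_choose (α : Finset ι) (k : ℕ) :
    #(univ.filter fun γ : {s : Finset ι // #s = k} => γ.1 ⊆ α) = (#α).choose k := by
  rw [← card_powersetCard, ← card_map (Function.Embedding.subtype _)]
  congr 1
  ext s
  simp [mem_powersetCard, and_comm]

lemma card_filter_superset_eq_card_sub {α : Finset ι} {k : ℕ} (hα : #α = k) :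
    #(univ.filter fun δ : {s : Finset ι // #s = k + 1} => α ⊆ δ.1) = Fintype.card ι - k := by
  subst hα
  rw [← card_compl]
  symm
  refine card_bij (fun x hx => ⟨insert x α, card_insert_of_notMem (mem_compl.mp hx)⟩)
    (fun x _ => mem_filter.mpr ⟨mem_univ _, subset_insert x α⟩) ?_ ?_
  · intro x hx y _ hxy
    have hinsert : insert x α = insert y α := congrArg Subtype.val hxy
    have hxy' : x ∈ insert y α := hinsert ▸ mem_insert_self x α
    simpa [mem_compl.mp hx] using hxy'
  · intro δ hδ
    obtain ⟨x, hx, hδx⟩ := exists_eq_insert_iff.mpr ⟨(mem_filter.mp hδ).2, δ.2.symm⟩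
    exact ⟨x, mem_compl.mpr hx, Subtype.ext hδx⟩

end Slices

section TwoValued

variable {ι α M : Type*} [Fintype ι] [DecidableEq α] [CommMonoid M]

@[to_additive]
lemma prod_comp_of_forall_eq_or_eq {f : ι → α} {a b : α} (h : ∀ i, f i = a ∨ f i = b)
    (g : α → M) :
    ∏ i, g (f i) =
      g b ^ #(univ.filter fun i => f i = b) * g a ^ #(univ.filter fun i => f i ≠ b) := by
  rw [← prod_filter_mul_prod_filter_not univ fun i => f i = b]
  congr 1
  · rw [← prod_const]
    exact prod_congr rfl fun i hi => by rw [(mem_filter.mp hi).2]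
  · rw [← prod_const]
    exact prod_congr rfl fun i hi => by rw [(h i).resolve_right (mem_filter.mp hi).2]

end TwoValued

section Hermitian

variable {𝕜 ι : Type*} [RCLike 𝕜] [Fintype ι] [DecidableEq ι] {A : Matrix ι ι 𝕜}

lemma Matrix.IsHermitian.eigenvalues_sq_eq (hA : A.IsHermitian) {a b : ℝ}
    (hq : A * A = a • A + b • 1) (i : ι) :
    hA.eigenvalues i ^ 2 = a * hA.eigenvalues i + b := by
  have : Nonempty ι := ⟨i⟩
  have h := spectrum.subset_polynomial_aeval A (X ^ 2 - C a * X - C b)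
    ⟨_, hA.eigenvalues_mem_spectrum_real i, rfl⟩
  have haeval : aeval A (X ^ 2 - C a * X - C b) = 0 := by
    simp [sq, hq, Algebra.algebraMap_eq_smul_one]
  rw [haeval, spectrum.zero_eq, Set.mem_singleton_iff] at h
  simp only [eval_sub, eval_pow, eval_X, eval_mul, eval_C] at h
  linarith

lemma Matrix.IsHermitian.eq_smul_one_of_eigenvalues_eq (hA : A.IsHermitian) {c : ℝ}
    (h : ∀ i, hA.eigenvalues i = c) : A = c • 1 := by
  have hdiag : diagonal (RCLike.ofReal ∘ hA.eigenvalues) = (c : 𝕜) • (1 : Matrix ι ι 𝕜) := by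
    ext i j
    simp [h, diagonal_apply, one_apply]
  rw [hA.spectral_theorem, hdiag, map_smul, map_one, RCLike.real_smul_eq_coe_smul (K := 𝕜)]

lemma Matrix.IsHermitian.rank_add_smul_one (hA : A.IsHermitian) (c : ℝ) :
    (A + c • 1).rank = Fintype.card {i // hA.eigenvalues i + c ≠ 0} := by
  have hdiag : diagonal (RCLike.ofReal ∘ hA.eigenvalues) + (c : 𝕜) • (1 : Matrix ι ι 𝕜) =
      diagonal (RCLike.ofReal ∘ fun i => hA.eigenvalues i + c) := by
    ext i j
    by_cases hij : i = j <;> simp [hij, add_smul, Algebra.algebraMap_eq_smul_one]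
  conv_lhs =>
    rw [hA.spectral_theorem, RCLike.real_smul_eq_coe_smul (K := 𝕜),
      ← map_one (Unitary.conjStarAlgAut 𝕜 _ hA.eigenvectorUnitary), ← map_smul, ← map_add, hdiag,
      Unitary.conjStarAlgAut_apply, ← Unitary.coe_star]
  simp [-isUnit_iff_ne_zero, -Unitary.coe_star, -map_add, rank_diagonal]

lemma Matrix.IsHermitian.two_le_ncard_spectrum (hA : A.IsHermitian) {u v : ι} (huv : u ≠ v)
    (h : A u v ≠ 0) : 2 ≤ (spectrum ℝ A).ncard := by
  rw [hA.spectrum_real_eq_range_eigenvalues]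
  by_contra hlt
  have hsub : (Set.range hA.eigenvalues).Subsingleton :=
    Set.ncard_le_one_iff_subsingleton.mp (by omega)
  apply h
  rw [hA.eq_smul_one_of_eigenvalues_eq fun i => hsub ⟨i, rfl⟩ ⟨u, rfl⟩]
  simp [one_apply_ne huv]

end Hermitian

lemma minQ_eq_two {V : Type*} [Fintype V] [DecidableEq V] {G : SimpleGraph V} {u v : V}
    (huv : G.Adj u v) {M : Matrix V V ℝ} (hM : M ∈ Sset G) (h2 : (spectrum ℝ M).ncard = 2) :
    minQ G = 2 := by
  refine le_antisymm (Nat.sInf_le ⟨M, hM, h2⟩) (le_csInf ⟨2, M, hM, h2⟩ ?_)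
  rintro k ⟨N, hN, rfl⟩
  exact (isHermitian_iff_isSymm.mpr hN.1).two_le_ncard_spectrum huv.ne ((hN.2 u v huv.ne).mpr huv)

section Entries

variable {n : ℕ}

lemma Wj_apply_of_not_subset {e : ℕ} {γ : {s : Finset (Fin n) // #s = e}}
    {α : {s : Finset (Fin n) // #s = e + 1}} (h : ¬γ.1 ⊆ α.1) : Wj n e γ α = 0 :=
  if_neg h

lemma Wj_apply_of_eq_insert {e : ℕ} {γ : {s : Finset (Fin n) // #s = e}}
    {α : {s : Finset (Fin n) // #s = e + 1}} {x : Fin n} (hx : x ∉ γ.1)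
    (hα : α.1 = insert x γ.1) : Wj n e γ α = signBelow γ.1 x := by
  have hsdiff : α.1 \ γ.1 = {x} := by rw [hα, insert_sdiff_of_notMem _ hx, sdiff_self]; rfl
  rw [Wj, if_pos (hα ▸ subset_insert x γ.1), hsdiff, hα, signBelow, filter_insert]
  simp

lemma Wj_mul_Wj_eq_zero_of_not_subset_inter {e : ℕ} {γ : {s : Finset (Fin n) // #s = e}}
    {α β : {s : Finset (Fin n) // #s = e + 1}} (h : ¬γ.1 ⊆ α.1 ∩ β.1) :
    Wj n e γ α * Wj n e γ β = 0 := by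
  by_cases hα : γ.1 ⊆ α.1
  · rw [Wj_apply_of_not_subset fun hβ => h (subset_inter hα hβ), mul_zero]
  · rw [Wj_apply_of_not_subset hα, zero_mul]

lemma Wj_mul_Wj_eq_zero_of_not_union_subset {e : ℕ} {α β : {s : Finset (Fin n) // #s = e}}
    {δ : {s : Finset (Fin n) // #s = e + 1}} (h : ¬α.1 ∪ β.1 ⊆ δ.1) :
    Wj n e α δ * Wj n e β δ = 0 := by
  by_cases hα : α.1 ⊆ δ.1
  · rw [Wj_apply_of_not_subset fun hβ => h (union_subset hα hβ), mul_zero]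
  · rw [Wj_apply_of_not_subset hα, zero_mul]

lemma Wj_mul_Wj_eq_zero_of_not_subset_subset {e : ℕ} {γ : {s : Finset (Fin n) // #s = e}}
    {α : {s : Finset (Fin n) // #s = e + 1}} {δ : {s : Finset (Fin n) // #s = e + 1 + 1}}
    (h : ¬(γ.1 ⊆ α.1 ∧ α.1 ⊆ δ.1)) : Wj n e γ α * Wj n (e + 1) α δ = 0 := by
  by_cases hγ : γ.1 ⊆ α.1
  · rw [Wj_apply_of_not_subset fun hδ => h ⟨hγ, hδ⟩, mul_zero]
  · rw [Wj_apply_of_not_subset hγ, zero_mul]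

lemma Wj_mul_self {e : ℕ} (γ : {s : Finset (Fin n) // #s = e})
    (α : {s : Finset (Fin n) // #s = e + 1}) :
    Wj n e γ α * Wj n e γ α = if γ.1 ⊆ α.1 then 1 else 0 := by
  unfold Wj
  split_ifs
  · rw [← pow_add, Even.neg_one_pow ⟨_, rfl⟩]
  · rw [mul_zero]

lemma Ajohnson_apply_self {d : ℕ} (α : {s : Finset (Fin n) // #s = d}) :
    Ajohnson n d α α = 0 := by
  simp [Ajohnson]

lemma Ajohnson_apply_of_eq_insert {d : ℕ} {α β : {s : Finset (Fin n) // #s = d}}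
    {T : Finset (Fin n)} {u v : Fin n} (hu : u ∉ T) (hv : v ∉ T) (huv : u ≠ v)
    (hα : α.1 = insert u T) (hβ : β.1 = insert v T) :
    Ajohnson n d α β = signBelow T u * signBelow T v := by
  have hinter : insert u T ∩ insert v T = T := by
    ext a
    by_cases hau : a = u <;> by_cases hav : a = v <;> simp_all
  rw [Ajohnson, hα, hβ, symmDiff_insert_insert hu hv huv, card_pair huv, if_pos rfl,
    signBelow_mul_signBelow hu hv, hjExp, symmDiff_insert_insert hu hv huv, hinter]
  simp

end Entries

lemma Ajohnson_isSymm (n d : ℕ) : (Ajohnson n d).IsSymm := by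
  ext α β
  simp only [transpose_apply, Ajohnson, hjExp, symmDiff_comm α.1, inter_comm α.1]

lemma Ajohnson_isHermitian (n d : ℕ) : (Ajohnson n d).IsHermitian :=
  isHermitian_iff_isSymm.mpr (Ajohnson_isSymm n d)

lemma Ajohnson_mem_Sset (n d : ℕ) : Ajohnson n d ∈ Sset (Johnson n d) := by
  refine ⟨Ajohnson_isSymm n d, fun α β _ => ?_⟩
  by_cases h : #(symmDiff α.1 β.1) = 2 <;> simp [Ajohnson, Johnson, h]

lemma Ajohnson_apply_eq_zero_or_eq_one_or_eq_neg_one (n d : ℕ) (α β) :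
    Ajohnson n d α β = 0 ∨ Ajohnson n d α β = 1 ∨ Ajohnson n d α β = -1 := by
  unfold Ajohnson
  split_ifs
  · exact Or.inr (neg_one_pow_eq_or ℝ _)
  · exact Or.inl rfl

lemma Ajohnson_trace (n d : ℕ) : (Ajohnson n d).trace = 0 :=
  sum_eq_zero fun α _ => Ajohnson_apply_self α

theorem Wj_transpose_mul_Wj (n e : ℕ) :
    (Wj n e)ᵀ * Wj n e = Ajohnson n (e + 1) + ((e : ℝ) + 1) • 1 := by
  ext α β
  simp only [mul_apply, transpose_apply, Matrix.add_apply, Matrix.smul_apply, smul_eq_mul]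
  rcases eq_or_ne α β with rfl | hne
  · simp only [Wj_mul_self, sum_boole, card_filter_subset_eq_choose, α.2,
      Nat.choose_succ_self_right, Ajohnson_apply_self, one_apply_eq]
    push_cast
    ring
  rw [one_apply_ne hne, mul_zero, add_zero]
  have hinter := card_inter_lt_of_ne α.2 β.2 (Subtype.coe_ne_coe.mpr hne)
  by_cases hadj : #(symmDiff α.1 β.1) = 2
  · obtain ⟨u, v, hu, hv, huv, hα, hβ⟩ :=
      exists_eq_insert_of_card_symmDiff_eq_two (α.2.trans β.2.symm) hadj
    have hT : #(α.1 ∩ β.1) = e := by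
      have := card_symmDiff_of_card_eq α.2 β.2; omega
    rw [Fintype.sum_eq_single ⟨α.1 ∩ β.1, hT⟩, Wj_apply_of_eq_insert hu hα,
      Wj_apply_of_eq_insert hv hβ, Ajohnson_apply_of_eq_insert hu hv huv hα hβ]
    refine fun γ hγ => Wj_mul_Wj_eq_zero_of_not_subset_inter fun hsub => hγ (Subtype.ext ?_)
    exact eq_of_subset_of_card_le hsub (by rw [hT, γ.2])
  · rw [Ajohnson, if_neg hadj]
    refine sum_eq_zero fun γ _ => Wj_mul_Wj_eq_zero_of_not_subset_inter fun hsub => hadj ?_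
    have := card_symmDiff_of_card_eq α.2 β.2
    have := γ.2 ▸ card_le_card hsub
    omega

theorem Wj_mul_Wj_transpose (n e : ℕ) :
    Wj n (e + 1) * (Wj n (e + 1))ᵀ = ((n : ℝ) - (e + 1)) • 1 - Ajohnson n (e + 1) := by
  ext α β
  simp only [mul_apply, transpose_apply, Matrix.sub_apply, Matrix.smul_apply, smul_eq_mul]
  rcases eq_or_ne α β with rfl | hne
  · have hen : e + 1 ≤ n := by simpa [α.2] using card_le_univ α.1
    simp only [Wj_mul_self, sum_boole, card_filter_superset_eq_card_sub α.2, Fintype.card_fin,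
      Ajohnson_apply_self, one_apply_eq]
    push_cast [hen]
    ring
  rw [one_apply_ne hne, mul_zero, zero_sub]
  have hinter := card_inter_lt_of_ne α.2 β.2 (Subtype.coe_ne_coe.mpr hne)
  have hunion := card_union_add_card_inter α.1 β.1
  have hsymm := card_symmDiff_of_card_eq α.2 β.2
  by_cases hadj : #(symmDiff α.1 β.1) = 2
  · obtain ⟨u, v, hu, hv, huv, hα, hβ⟩ :=
      exists_eq_insert_of_card_symmDiff_eq_two (α.2.trans β.2.symm) hadj
    have hδ : #(α.1 ∪ β.1) = e + 1 + 1 := by omega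
    have huβ : u ∉ β.1 := fun h => hu (mem_inter.mpr ⟨by rw [hα]; exact mem_insert_self _ _, h⟩)
    have hvα : v ∉ α.1 := fun h => hv (mem_inter.mpr ⟨h, by rw [hβ]; exact mem_insert_self _ _⟩)
    have hδα : α.1 ∪ β.1 = insert v α.1 := by
      rw [hβ, union_insert, union_eq_left.mpr inter_subset_left]
    have hδβ : α.1 ∪ β.1 = insert u β.1 := by
      rw [hα, insert_union, union_eq_right.mpr inter_subset_right]
    rw [Fintype.sum_eq_single ⟨α.1 ∪ β.1, hδ⟩, Wj_apply_of_eq_insert hvα hδα,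
      Wj_apply_of_eq_insert huβ hδβ, Ajohnson_apply_of_eq_insert hu hv huv hα hβ]
    · have hsα : signBelow α.1 v = (if u < v then -1 else 1) * signBelow (α.1 ∩ β.1) v := by
        rw [← signBelow_insert hu, ← hα]
      have hsβ : signBelow β.1 u = (if v < u then -1 else 1) * signBelow (α.1 ∩ β.1) u := by
        rw [← signBelow_insert hv, ← hβ]
      rw [hsα, hsβ]
      linear_combination (signBelow (α.1 ∩ β.1) u * signBelow (α.1 ∩ β.1) v) *
        ite_lt_mul_ite_lt huv
    refine fun δ hδne => Wj_mul_Wj_eq_zero_of_not_union_subset fun hsub => hδne (Subtype.ext ?_)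
    exact (eq_of_subset_of_card_le hsub (by rw [δ.2, hδ])).symm
  · rw [Ajohnson, if_neg hadj, neg_zero]
    refine sum_eq_zero fun δ _ => Wj_mul_Wj_eq_zero_of_not_union_subset fun hsub => hadj ?_
    have := δ.2 ▸ card_le_card hsub
    omega

theorem Wj_mul_Wj_succ (n e : ℕ) : Wj n e * Wj n (e + 1) = 0 := by
  ext γ δ
  rw [mul_apply, Matrix.zero_apply]
  by_cases hsub : γ.1 ⊆ δ.1
  swap
  · exact sum_eq_zero fun α _ =>
      Wj_mul_Wj_eq_zero_of_not_subset_subset fun h => hsub (h.1.trans h.2)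
  obtain ⟨u, v, hu, hv, huv, hδ⟩ :=
    exists_eq_insert_insert_of_subset hsub (by rw [γ.2, δ.2])
  let α₁ : {s : Finset (Fin n) // #s = e + 1} :=
    ⟨insert u γ.1, by rw [card_insert_of_notMem hu, γ.2]⟩
  let α₂ : {s : Finset (Fin n) // #s = e + 1} :=
    ⟨insert v γ.1, by rw [card_insert_of_notMem hv, γ.2]⟩
  have hvα₁ : v ∉ α₁.1 := by simp [α₁, hv, Ne.symm huv]
  have huα₂ : u ∉ α₂.1 := by simp [α₂, hu, huv]
  have hne : α₁ ≠ α₂ := fun h => huα₂ (h ▸ mem_insert_self u γ.1)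
  rw [Fintype.sum_eq_add α₁ α₂ hne, Wj_apply_of_eq_insert hu rfl, Wj_apply_of_eq_insert hv rfl,
    Wj_apply_of_eq_insert hvα₁ (hδ.trans (insert_comm _ _ _)), Wj_apply_of_eq_insert huα₂ hδ,
    signBelow_insert hu, signBelow_insert hv]
  · linear_combination (signBelow γ.1 u * signBelow γ.1 v) * ite_lt_add_ite_lt huv
  rintro α ⟨hα₁, hα₂⟩
  refine Wj_mul_Wj_eq_zero_of_not_subset_subset fun ⟨hγα, hαδ⟩ => ?_
  obtain ⟨w, hw, hαw⟩ := exists_eq_insert_iff.mpr ⟨hγα, by rw [γ.2, α.2]⟩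
  have hwδ : w ∈ insert u (insert v γ.1) := hδ ▸ hαδ (hαw ▸ mem_insert_self w γ.1)
  rcases mem_insert.mp hwδ with rfl | hwδ
  · exact hα₁ (Subtype.ext hαw.symm)
  rcases mem_insert.mp hwδ with rfl | hwγ
  · exact hα₂ (Subtype.ext hαw.symm)
  · exact hw hwγ

theorem Ajohnson_add_smul_one_mul_self (n e : ℕ) :
    (Ajohnson n (e + 1) + ((e : ℝ) + 1) • 1) * (Ajohnson n (e + 1) + ((e : ℝ) + 1) • 1) =
      (n : ℝ) • (Ajohnson n (e + 1) + ((e : ℝ) + 1) • 1) := by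
  rw [← Wj_transpose_mul_Wj]
  have hsum : Wj n (e + 1) * (Wj n (e + 1))ᵀ = (n : ℝ) • 1 - (Wj n e)ᵀ * Wj n e := by
    rw [Wj_mul_Wj_transpose, Wj_transpose_mul_Wj]
    module
  calc (Wj n e)ᵀ * Wj n e * ((Wj n e)ᵀ * Wj n e)
      = (Wj n e)ᵀ * Wj n e * ((n : ℝ) • 1 - Wj n (e + 1) * (Wj n (e + 1))ᵀ) := by
        rw [hsum, sub_sub_cancel]
    _ = (n : ℝ) • ((Wj n e)ᵀ * Wj n e) -
          (Wj n e)ᵀ * (Wj n e * Wj n (e + 1)) * (Wj n (e + 1))ᵀ := by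
        simp only [Matrix.mul_sub, Matrix.mul_smul, Matrix.mul_one, Matrix.mul_assoc]
    _ = (n : ℝ) • ((Wj n e)ᵀ * Wj n e) := by
        rw [Wj_mul_Wj_succ, Matrix.mul_zero, Matrix.zero_mul, sub_zero]

theorem Ajohnson_mul_self (n e : ℕ) :
    Ajohnson n (e + 1) * Ajohnson n (e + 1) =
      ((n : ℝ) - 2 * ((e : ℝ) + 1)) • Ajohnson n (e + 1) +
        (((e : ℝ) + 1) * ((n : ℝ) - ((e : ℝ) + 1))) • 1 := by
  set A := Ajohnson n (e + 1)
  set c : ℝ := (e : ℝ) + 1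
  calc A * A = (A + c • 1) * (A + c • 1) - (2 * c) • A - (c * c) • 1 := by
        simp only [Matrix.add_mul, Matrix.mul_add, Matrix.smul_mul, Matrix.mul_smul,
          Matrix.one_mul, Matrix.mul_one]
        module
    _ = _ := by
        rw [Ajohnson_add_smul_one_mul_self]
        module

lemma Ajohnson_eigenvalues_eq_or_eq (n e : ℕ) (α : {s : Finset (Fin n) // #s = e + 1}) :
    (Ajohnson_isHermitian n (e + 1)).eigenvalues α = -((e : ℝ) + 1) ∨
      (Ajohnson_isHermitian n (e + 1)).eigenvalues α = n - ((e : ℝ) + 1) := by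
  have h := (Ajohnson_isHermitian n (e + 1)).eigenvalues_sq_eq (Ajohnson_mul_self n e) α
  have hfactor : ((Ajohnson_isHermitian n (e + 1)).eigenvalues α + ((e : ℝ) + 1)) *
      ((Ajohnson_isHermitian n (e + 1)).eigenvalues α - (n - ((e : ℝ) + 1))) = 0 := by
    linear_combination h
  rcases mul_eq_zero.mp hfactor with h | h
  · exact Or.inl (by linarith)
  · exact Or.inr (by linarith)

section JohnsonSpectrum

variable {n e : ℕ}

lemma Ajohnson_card_eigenvalues_eq (hn : 0 < n) :
    #(univ.filter fun α => (Ajohnson_isHermitian n (e + 1)).eigenvalues α = n - ((e : ℝ) + 1)) =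
      (n - 1).choose e := by
  set hA := Ajohnson_isHermitian n (e + 1)
  have htrace := hA.trace_eq_sum_eigenvalues
  simp only [RCLike.ofReal_real_eq_id, id, Ajohnson_trace] at htrace
  have hsum := sum_comp_of_forall_eq_or_eq (Ajohnson_eigenvalues_eq_or_eq n e) id
  simp only [id, nsmul_eq_mul] at hsum
  rw [hsum] at htrace
  have hcard := card_filter_add_card_filter_not
    (s := univ) (fun α => hA.eigenvalues α = n - ((e : ℝ) + 1))
  rw [card_univ, Fintype.card_finset_len, Fintype.card_fin] at hcard
  have hchoose := Nat.add_one_mul_choose_eq (n - 1) e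
  rw [Nat.sub_add_cancel hn] at hchoose
  refine Nat.eq_of_mul_eq_mul_left hn ?_
  rw [hchoose, ← hcard]
  rify
  linear_combination -htrace

lemma Ajohnson_card_eigenvalues_ne (hn : 0 < n) :
    #(univ.filter fun α => (Ajohnson_isHermitian n (e + 1)).eigenvalues α ≠ n - ((e : ℝ) + 1)) =
      (n - 1).choose (e + 1) := by
  have hcard := card_filter_add_card_filter_not (s := univ)
    (fun α => (Ajohnson_isHermitian n (e + 1)).eigenvalues α = n - ((e : ℝ) + 1))
  rw [card_univ, Fintype.card_finset_len, Fintype.card_fin, Ajohnson_card_eigenvalues_eq hn]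
    at hcard
  have hpascal := Nat.choose_succ_succ' (n - 1) e
  rw [Nat.sub_add_cancel hn] at hpascal
  simp only [ne_eq]
  omega

theorem Ajohnson_charpoly (hn : 0 < n) :
    (Ajohnson n (e + 1)).charpoly =
      (X + C ((e : ℝ) + 1)) ^ (n - 1).choose (e + 1) *
        (X - C ((n : ℝ) - ((e : ℝ) + 1))) ^ (n - 1).choose e := by
  have hprod := prod_comp_of_forall_eq_or_eq (Ajohnson_eigenvalues_eq_or_eq n e) fun x => X - C x
  rw [(Ajohnson_isHermitian n (e + 1)).charpoly_eq]
  simp only [RCLike.ofReal_real_eq_id, id] at hprod ⊢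
  rw [hprod, Ajohnson_card_eigenvalues_eq hn, Ajohnson_card_eigenvalues_ne hn, mul_comm, map_neg,
    sub_neg_eq_add]

theorem Ajohnson_rank_add_smul_one (hn : 0 < n) :
    (Ajohnson n (e + 1) + ((e : ℝ) + 1) • 1).rank = (n - 1).choose e := by
  rw [(Ajohnson_isHermitian n (e + 1)).rank_add_smul_one, Fintype.card_subtype,
    ← Ajohnson_card_eigenvalues_eq hn]
  have hn' : (n : ℝ) ≠ 0 := by positivity
  refine congrArg card (filter_congr fun α _ => ?_)
  rcases Ajohnson_eigenvalues_eq_or_eq n e α with h | h <;> rw [h]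
  · simp only [neg_add_cancel, ne_eq, not_true_eq_false, false_iff]
    intro h'
    exact hn' (by linarith)
  · simp only [sub_add_cancel, ne_eq, hn', not_false_eq_true]

theorem Ajohnson_spectrum (hn : e + 2 ≤ n) :
    spectrum ℝ (Ajohnson n (e + 1)) = {-((e : ℝ) + 1), (n : ℝ) - ((e : ℝ) + 1)} := by
  rw [(Ajohnson_isHermitian n (e + 1)).spectrum_real_eq_range_eigenvalues]
  refine Set.Subset.antisymm (Set.range_subset_iff.mpr (Ajohnson_eigenvalues_eq_or_eq n e)) ?_
  rw [Set.insert_subset_iff, Set.singleton_subset_iff]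
  constructor
  · obtain ⟨α, hα⟩ : (univ.filter fun α =>
        (Ajohnson_isHermitian n (e + 1)).eigenvalues α ≠ n - ((e : ℝ) + 1)).Nonempty := by
      rw [← card_pos, Ajohnson_card_eigenvalues_ne (by omega)]
      exact Nat.choose_pos (by omega)
    exact ⟨α, (Ajohnson_eigenvalues_eq_or_eq n e α).resolve_right (mem_filter.mp hα).2⟩
  · obtain ⟨α, hα⟩ : (univ.filter fun α =>
        (Ajohnson_isHermitian n (e + 1)).eigenvalues α = n - ((e : ℝ) + 1)).Nonempty := by
      rw [← card_pos, Ajohnson_card_eigenvalues_eq (by omega)]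
      exact Nat.choose_pos (by omega)
    exact ⟨α, (mem_filter.mp hα).2⟩

lemma Johnson_exists_adj (hn : e + 2 ≤ n) : ∃ α β, (Johnson n (e + 1)).Adj α β := by
  obtain ⟨T, -, hT⟩ := exists_subset_card_eq (s := (univ : Finset (Fin n))) (n := e)
    (by rw [card_univ, Fintype.card_fin]; omega)
  obtain ⟨u, hu, v, hv, huv⟩ := one_lt_card.mp
    (by rw [card_compl, hT, Fintype.card_fin]; omega : 1 < #Tᶜ)
  rw [mem_compl] at hu hv
  exact ⟨⟨insert u T, by rw [card_insert_of_notMem hu, hT]⟩,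
    ⟨insert v T, by rw [card_insert_of_notMem hv, hT]⟩,
    by simp only [Johnson, symmDiff_insert_insert hu hv huv, card_pair huv]⟩

end JohnsonSpectrum

/-- For `d ≥ 1`, `n ≥ d + 1`, the signed adjacency matrix `A = A_{n,d}`
of the Johnson graph satisfies `A² = (n − 2d)A + d(n − d)I`, `rank(A + dI) = C(n−1,d−1)`;
its eigenvalues are `−d` with multiplicity `C(n−1,d)` and `n − d` with multiplicity
`C(n−1,d−1)` (stated via the characteristic polynomial); `A ∈ S(J(n,d))` has entries in
`{0, 1, −1}`, and `q(J(n,d)) = 2`. -/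
theorem stmt_5 (n d : ℕ) (hd : 1 ≤ d) (hn : d + 1 ≤ n) :
    Ajohnson n d * Ajohnson n d =
        ((n : ℝ) - 2 * d) • Ajohnson n d + ((d : ℝ) * ((n : ℝ) - d)) • (1 : Matrix _ _ ℝ) ∧
    (Ajohnson n d + (d : ℝ) • (1 : Matrix _ _ ℝ)).rank = (n - 1).choose (d - 1) ∧
    (Ajohnson n d).charpoly =
        (X + C (d : ℝ)) ^ ((n - 1).choose d) * (X - C ((n : ℝ) - d)) ^ ((n - 1).choose (d - 1)) ∧
    Ajohnson n d ∈ Sset (Johnson n d) ∧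
    (∀ α β, Ajohnson n d α β = 0 ∨ Ajohnson n d α β = 1 ∨ Ajohnson n d α β = -1) ∧
    minQ (Johnson n d) = 2 := by
  obtain ⟨e, rfl⟩ : ∃ e, d = e + 1 := ⟨d - 1, by omega⟩
  obtain ⟨α, β, hαβ⟩ := Johnson_exists_adj hn
  have hspectrum : (spectrum ℝ (Ajohnson n (e + 1))).ncard = 2 := by
    rw [Ajohnson_spectrum hn, Set.ncard_pair]
    intro h
    have : (n : ℝ) = 0 := by linarith
    norm_cast at this
    omega
  push_cast
  exact ⟨Ajohnson_mul_self n e, Ajohnson_rank_add_smul_one (by omega), Ajohnson_charpoly (by omega),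
    Ajohnson_mem_Sset n (e + 1), Ajohnson_apply_eq_zero_or_eq_one_or_eq_neg_one n (e + 1),
    minQ_eq_two hαβ (Ajohnson_mem_Sset n (e + 1)) hspectrum⟩
end

section
/- Let n ≥ 3 be an integer and let d ≥ 3 be odd. Then there exists a real symmetric matrix M, indexed by the d-tuples over {0,…,n−1}, such that M² = M, M ≠ 0, M ≠ I, and for all distinct d-tuples u, v: M(u,v) ≠ 0 if and only if the Hamming distance between u and v is at most d − 1. Consequently, for G the complement of the distance-d Hamming graph H(d,n,d) (two distinct d-tuples adjacent iff they agree in at least one coordinate), M ∈ S(G) has exactly two distinct eigenvalues (0 and 1), so q(G) = 2. -/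
/-!
In the Bose–Mesner algebra of the Hamming scheme on `[n]^d`, the primitive idempotents
`E₀ = J / n^d` and `E_d = (I - J/n)^{⊗d}` are orthogonal, so `M = I - E₀ - E_d` is an idempotent.
At Hamming distance `k > 0` its entry is `-n^{-d} (1 + (-1)^k (n-1)^{d-k})`: for `k < d` the
second summand has absolute value at least `2` when `n ≥ 3`, and for `k = d` the entry vanishes
exactly because `d` is odd. So `M` has the zero pattern of the complement of `H(d,n,d)` and
spectrum `{0, 1}`. Conversely a real symmetric matrix with a single eigenvalue is scalar, so no
matrix in `S(G)` for a graph `G` with an edge has fewer than two eigenvalues.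
-/

open Matrix

/-- The distance-`d` graph `H(d,n,d)` of the Hamming graph: vertices are `d`-tuples over
an `n`-set, adjacent iff they differ in all `d` coordinates. -/
def HammingDistD (d n : ℕ) : SimpleGraph (Fin d → Fin n) where
  Adj u v := u ≠ v ∧ hammingDist u v = d
  symm := ⟨fun u v h => ⟨h.1.symm, by rw [hammingDist_comm]; exact h.2⟩⟩
  loopless := ⟨fun u h => h.1 rfl⟩

namespace Matrix

variable {ι α R : Type*} [Fintype ι]

def kroneckerPow (ι : Type*) [Fintype ι] [CommMonoid R] (A : Matrix α α R) :
    Matrix (ι → α) (ι → α) R :=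
  of fun u v => ∏ i, A (u i) (v i)

@[simp]
lemma kroneckerPow_apply [CommMonoid R] (A : Matrix α α R) (u v : ι → α) :
    kroneckerPow ι A u v = ∏ i, A (u i) (v i) :=
  rfl

lemma kroneckerPow_mul [CommSemiring R] [Fintype α] [DecidableEq ι] (A B : Matrix α α R) :
    kroneckerPow ι (A * B) = kroneckerPow ι A * kroneckerPow ι B := by
  ext u w
  simp only [kroneckerPow_apply, mul_apply, Finset.prod_univ_sum, Fintype.piFinset_univ,
    Finset.prod_mul_distrib]

lemma kroneckerPow_zero [CommMonoidWithZero R] [Nonempty ι] :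
    kroneckerPow ι (0 : Matrix α α R) = 0 := by
  ext u v
  simp

lemma IsSymm.kroneckerPow [CommMonoid R] {A : Matrix α α R} (hA : A.IsSymm) :
    (kroneckerPow ι A).IsSymm :=
  IsSymm.ext fun u v => by simp only [kroneckerPow_apply, hA.apply]

lemma isIdempotentElem_kroneckerPow [CommSemiring R] [Fintype α] [DecidableEq ι]
    {A : Matrix α α R} (hA : IsIdempotentElem A) :
    IsIdempotentElem (kroneckerPow ι A) := by
  rw [IsIdempotentElem, ← kroneckerPow_mul, hA.eq]

lemma kroneckerPow_apply_eq_pow_hammingDist [CommMonoid R] [DecidableEq α] {A : Matrix α α R}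
    {x y : R} (hdiag : ∀ a, A a a = x) (hoff : ∀ a b, a ≠ b → A a b = y) (u v : ι → α) :
    kroneckerPow ι A u v = y ^ hammingDist u v * x ^ (Fintype.card ι - hammingDist u v) := by
  have hA : ∀ a b, A a b = if a ≠ b then y else x := fun a b => by
    split_ifs with h
    · exact hoff a b h
    · rw [not_not.mp h, hdiag]
  have hcard : (Finset.univ.filter fun i => ¬u i ≠ v i).card =
      Fintype.card ι - hammingDist u v := by
    have := Finset.card_filter_add_card_filter_not (s := Finset.univ) (fun i => u i ≠ v i)
    rw [Finset.card_univ] at this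
    unfold hammingDist
    omega
  simp only [kroneckerPow_apply, hA, Finset.prod_ite, Finset.prod_const, hcard]
  rfl

end Matrix

section Hamming

variable {ι α : Type*} [Fintype ι] [DecidableEq α]

lemma hammingDist_update_le_one [DecidableEq ι] (x : ι → α) (i : ι) (b : α) :
    hammingDist x (Function.update x i b) ≤ 1 := by
  refine (Finset.card_le_card (t := {i}) fun j hj => ?_).trans (Finset.card_singleton i).le
  by_contra hji
  simp [Function.update_of_ne (Finset.mem_singleton.not.mp hji)] at hj

lemma exists_ne_hammingDist_le_one [DecidableEq ι] [Nonempty ι] [Nontrivial α] :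
    ∃ u v : ι → α, u ≠ v ∧ hammingDist u v ≤ 1 := by
  obtain ⟨a, b, hab⟩ := exists_pair_ne α
  obtain ⟨i⟩ := ‹Nonempty ι›
  refine ⟨fun _ => a, Function.update (fun _ => a) i b, fun h => hab ?_,
    hammingDist_update_le_one _ _ _⟩
  simpa using congrFun h i

end Hamming

lemma IsIdempotentElem.one_sub_sub {R : Type*} [Ring R] {a b : R} (ha : IsIdempotentElem a)
    (hb : IsIdempotentElem b) (hab : a * b = 0) (hba : b * a = 0) :
    IsIdempotentElem (1 - a - b) := by
  rw [sub_sub]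
  exact (ha.add hb (by rw [hab, hba, add_zero])).one_sub

lemma IsIdempotentElem.spectrum_eq (𝕜 : Type*) {A : Type*} [Field 𝕜] [Ring A] [Algebra 𝕜 A]
    {p : A} (hp : IsIdempotentElem p) (hp0 : p ≠ 0) (hp1 : p ≠ 1) :
    spectrum 𝕜 p = {0, 1} := by
  refine (hp.spectrum_subset 𝕜).antisymm (Set.insert_subset_iff.mpr ⟨?_, ?_⟩)
  · rw [spectrum.zero_mem_iff]
    exact fun hu => hp1 ((IsIdempotentElem.iff_eq_one_of_isUnit hu).mp hp)
  · rw [Set.singleton_subset_iff, spectrum.mem_iff, map_one]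
    exact fun hu =>
      hp0 (sub_eq_self.mp ((IsIdempotentElem.iff_eq_one_of_isUnit hu).mp hp.one_sub))

namespace Matrix

variable {α 𝕜 : Type*} [Fintype α]

def averaging (α 𝕜 : Type*) [Fintype α] [DivisionRing 𝕜] : Matrix α α 𝕜 :=
  of fun _ _ => (Fintype.card α : 𝕜)⁻¹

lemma isSymm_averaging [DivisionRing 𝕜] : (averaging α 𝕜).IsSymm :=
  IsSymm.ext fun _ _ => rfl

lemma isIdempotentElem_averaging [DivisionRing 𝕜] (h : (Fintype.card α : 𝕜) ≠ 0) :
    IsIdempotentElem (averaging α 𝕜) := by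
  ext a c
  simp only [averaging, mul_apply, of_apply, Finset.sum_const, Finset.card_univ, nsmul_eq_mul,
    ← mul_assoc, mul_inv_cancel₀ h, one_mul]

end Matrix

section HammingProj

variable {ι α : Type*} [Fintype ι] [Fintype α] [DecidableEq α]

/-- `I - E₀ - E_D`, where `E₀ = J / |α|^D` and `E_D = (I - J/|α|)^{⊗ι}` (with `D = |ι|`) are the
first and last primitive idempotents of the Hamming scheme on `ι → α`: the orthogonal projection
onto the sum of its eigenspaces `E₁, …, E_{D-1}`. -/
noncomputable def hammingProj (ι α : Type*) [Fintype ι] [Fintype α] [DecidableEq α] :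
    Matrix (ι → α) (ι → α) ℝ :=
  1 - kroneckerPow ι (averaging α ℝ) - kroneckerPow ι (1 - averaging α ℝ)

lemma isSymm_hammingProj : (hammingProj ι α).IsSymm :=
  (isSymm_one.sub isSymm_averaging.kroneckerPow).sub
    (isSymm_one.sub isSymm_averaging).kroneckerPow

lemma isIdempotentElem_hammingProj [DecidableEq ι] [Nonempty ι] [Nonempty α] :
    IsIdempotentElem (hammingProj ι α) := by
  have hP := isIdempotentElem_averaging (α := α) (𝕜 := ℝ) (by simp)
  refine (isIdempotentElem_kroneckerPow hP).one_sub_sub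
    (isIdempotentElem_kroneckerPow hP.one_sub) ?_ ?_
  · rw [← kroneckerPow_mul, hP.mul_one_sub_self, kroneckerPow_zero]
  · rw [← kroneckerPow_mul, hP.one_sub_mul_self, kroneckerPow_zero]

lemma hammingProj_apply_of_ne {u v : ι → α} (huv : u ≠ v) :
    hammingProj ι α u v = -((Fintype.card α : ℝ)⁻¹) ^ Fintype.card ι *
      (1 + (-1) ^ hammingDist u v *
        ((Fintype.card α : ℝ) - 1) ^ (Fintype.card ι - hammingDist u v)) := by
  set N : ℝ := (Fintype.card α : ℝ)
  have hE₀ : kroneckerPow ι (averaging α ℝ) u v = N⁻¹ ^ Fintype.card ι := by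
    simp [averaging, N]
  have hE_D := kroneckerPow_apply_eq_pow_hammingDist (A := 1 - averaging α ℝ)
    (x := 1 - N⁻¹) (y := -N⁻¹) (by simp [averaging, N]) (fun a b hab => by
      simp [averaging, one_apply_ne hab, N]) u v
  obtain ⟨m, hm⟩ := Nat.exists_eq_add_of_le (hammingDist_le_card_fintype (x := u) (y := v))
  obtain ⟨i, -⟩ := Function.ne_iff.mp huv
  have : Nonempty α := ⟨u i⟩
  have hN : N ≠ 0 := Nat.cast_ne_zero.mpr Fintype.card_ne_zero
  rw [hammingProj, Matrix.sub_apply, Matrix.sub_apply, one_apply_ne huv, hE₀, hE_D, hm,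
    Nat.add_sub_cancel_left, show 1 - N⁻¹ = (N - 1) * N⁻¹ by field_simp, mul_pow]
  ring

lemma one_add_neg_one_pow_mul_pow_ne_zero {x : ℝ} (hx : 2 ≤ x) (k : ℕ) {m : ℕ} (hm : m ≠ 0) :
    1 + (-1) ^ k * x ^ m ≠ 0 := by
  have hxm : 2 ≤ x ^ m := hx.trans (le_self_pow₀ (by linarith) hm)
  rcases neg_one_pow_eq_or ℝ k with h | h <;> rw [h] <;> intro <;> linarith

lemma hammingProj_apply_ne_zero_iff (hα : 3 ≤ Fintype.card α) (hι : Odd (Fintype.card ι))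
    {u v : ι → α} (huv : u ≠ v) :
    hammingProj ι α u v ≠ 0 ↔ hammingDist u v ≠ Fintype.card ι := by
  have hN : (3 : ℝ) ≤ Fintype.card α := by exact_mod_cast hα
  rw [hammingProj_apply_of_ne huv, mul_ne_zero_iff,
    and_iff_right (neg_ne_zero.mpr (pow_ne_zero _ (inv_ne_zero (by positivity))))]
  by_cases hk : hammingDist u v = Fintype.card ι
  · simp [hk, hι.neg_one_pow]
  · refine iff_of_true (one_add_neg_one_pow_mul_pow_ne_zero (by linarith) _ ?_) hk
    have := hammingDist_le_card_fintype (x := u) (y := v)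
    omega

end HammingProj

lemma hammingDistD_compl_adj {d n : ℕ} {u v : Fin d → Fin n} :
    (HammingDistD d n)ᶜ.Adj u v ↔ u ≠ v ∧ hammingDist u v ≠ d := by
  simp only [SimpleGraph.compl_adj, HammingDistD]
  tauto

lemma Matrix.IsHermitian.eq_smul_one_of_spectrum_subset {𝕜 m : Type*} [RCLike 𝕜] [Fintype m]
    [DecidableEq m] {A : Matrix m m 𝕜} (hA : A.IsHermitian) {c : ℝ} (h : spectrum ℝ A ⊆ {c}) :
    A = (c : 𝕜) • 1 := by
  have hc : ∀ i, hA.eigenvalues i = c := fun i => h (hA.eigenvalues_mem_spectrum_real i)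
  have hdiag : diagonal (RCLike.ofReal ∘ hA.eigenvalues) = (c : 𝕜) • (1 : Matrix m m 𝕜) := by
    rw [smul_one_eq_diagonal]
    exact congrArg diagonal (funext fun i => by simp [hc])
  conv_lhs => rw [hA.spectral_theorem, hdiag, map_smul, map_one]

lemma two_le_ncard_spectrum_of_isSymm {m : Type*} [Fintype m] [DecidableEq m]
    {N : Matrix m m ℝ} (hN : N.IsSymm) {u v : m} (huv : u ≠ v) (hNuv : N u v ≠ 0) :
    2 ≤ (spectrum ℝ N).ncard := by
  have hH : N.IsHermitian := by rwa [IsHermitian, conjTranspose_eq_transpose_of_trivial]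
  by_contra! hlt
  obtain ⟨c, hc⟩ := (Set.ncard_le_one_iff_subset_singleton Matrix.finite_real_spectrum).mp
    (Nat.le_of_lt_succ hlt)
  exact hNuv (by rw [hH.eq_smul_one_of_spectrum_subset hc]; simp [one_apply_ne huv])

lemma minQ_eq_two_of_ncard_spectrum_eq_two {V : Type*} [Fintype V] [DecidableEq V]
    {G : SimpleGraph V} {u v : V} (huv : G.Adj u v) {M : Matrix V V ℝ} (hM : M ∈ Sset G)
    (hspec : (spectrum ℝ M).ncard = 2) : minQ G = 2 := by
  refine le_antisymm (Nat.sInf_le ⟨M, hM, hspec⟩) (le_csInf ⟨2, M, hM, hspec⟩ ?_)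
  rintro k ⟨N, ⟨hN, hNG⟩, rfl⟩
  exact two_le_ncard_spectrum_of_isSymm hN huv.ne ((hNG u v huv.ne).mpr huv)

/-- For `n ≥ 3` and odd `d ≥ 3`, there is a real symmetric idempotent
`M ≠ 0, I` indexed by the `d`-tuples over `{0,…,n−1}` whose off-diagonal entry `M(u,v)` is
nonzero exactly when the Hamming distance of `u` and `v` is at most `d − 1`.  Consequently,
for `G` the complement of the distance-`d` Hamming graph `H(d,n,d)`, `M ∈ S(G)` has exactly
two distinct eigenvalues (`0` and `1`), so `q(G) = 2`. -/
theorem stmt_18 (n d : ℕ) (hn : 3 ≤ n) (hd : 3 ≤ d) (hodd : Odd d) :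
    ∃ M : Matrix (Fin d → Fin n) (Fin d → Fin n) ℝ,
      M.IsSymm ∧ M * M = M ∧ M ≠ 0 ∧ M ≠ 1 ∧
      (∀ u v, u ≠ v → (M u v ≠ 0 ↔ hammingDist u v ≤ d - 1)) ∧
      M ∈ Sset ((HammingDistD d n)ᶜ) ∧
      spectrum ℝ M = {0, 1} ∧
      minQ ((HammingDistD d n)ᶜ) = 2 := by
  have : NeZero d := ⟨by omega⟩
  have : Nontrivial (Fin n) := Fin.nontrivial_iff_two_le.mpr (by omega)
  have hM_ne_zero_iff (u v : Fin d → Fin n) (huv : u ≠ v) :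
      hammingProj (Fin d) (Fin n) u v ≠ 0 ↔ hammingDist u v ≠ d := by
    simpa using hammingProj_apply_ne_zero_iff (by simpa using hn) (by simpa using hodd) huv
  have hM_mem : hammingProj (Fin d) (Fin n) ∈ Sset (HammingDistD d n)ᶜ :=
    ⟨isSymm_hammingProj, fun u v huv => by
      rw [hM_ne_zero_iff u v huv, hammingDistD_compl_adj, and_iff_right huv]⟩
  obtain ⟨u, v, huv, hdist⟩ := exists_ne_hammingDist_le_one (ι := Fin d) (α := Fin n)
  have hMuv : hammingProj (Fin d) (Fin n) u v ≠ 0 := (hM_ne_zero_iff u v huv).mpr (by omega)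
  have hM_ne_zero : hammingProj (Fin d) (Fin n) ≠ 0 := fun h => hMuv (by simp [h])
  have hM_ne_one : hammingProj (Fin d) (Fin n) ≠ 1 := fun h => hMuv (by simp [h, huv])
  have hspec := isIdempotentElem_hammingProj.spectrum_eq ℝ hM_ne_zero hM_ne_one
  refine ⟨hammingProj (Fin d) (Fin n), isSymm_hammingProj, isIdempotentElem_hammingProj,
    hM_ne_zero, hM_ne_one, fun u v huv => ?_, hM_mem, hspec,
    minQ_eq_two_of_ncard_spectrum_eq_two (hammingDistD_compl_adj.mpr ⟨huv, by omega⟩) hM_mem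
      (by rw [hspec]; exact Set.ncard_pair zero_ne_one)⟩
  have hle := hammingDist_le_card_fintype (x := u) (y := v)
  rw [Fintype.card_fin] at hle
  rw [hM_ne_zero_iff u v huv]
  omega
end

section
/- For integers d ≥ 3, 0 ≤ j ≤ d, and t ∈ {0,1,2}, define ζ(d,j,t) = Σ_{0 ≤ i ≤ d, i ≡ t (mod 3)} C(d,i) · Σ_{h=0}^{j} (−1)^h · C(i,h) · C(d−i, j−h), and for 1 ≤ j ≤ d define κ(d,j) = (−3)^{⌈j/2⌉ − 1} · C(d,j). Write d = 3r + s with r ≥ 1 an integer and s ∈ {−2, 0, 2}. Then: (1) if (s,t) ∈ {(−2,1), (2,0), (0,2)}, then ζ(d,0,t) = (2^d − (−1)^d)/3 and ζ(d,j,t) = (−1)^r · κ(d,j) for all 1 ≤ j ≤ d; (2) if (s,t) ∈ {(−2,0), (2,2), (0,1)}, then ζ(d,0,t) = (2^d − (−1)^d)/3 and ζ(d,j,t) = (−1)^{r+j} · κ(d,j) for all 1 ≤ j ≤ d; (3) if (s,t) ∈ {(−2,2), (2,1), (0,0)}, then ζ(d,0,t) = (2^d + 2·(−1)^d)/3 and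 ζ(d,j,t) = (−1)^{r+1} · 2 · κ(d,j) for all even j with 2 ≤ j ≤ d; (4) if (s,t) ∈ {(−2,2), (2,1), (0,0)} and 1 ≤ j ≤ d is odd, then ζ(d,j,t) = 0. -/
/-- `ζ(d,j,t) = Σ_{0 ≤ i ≤ d, i ≡ t (mod 3)} C(d,i) · Σ_{h=0}^{j} (−1)^h C(i,h) C(d−i,j−h)`. -/
def zetaH (d j t : ℕ) : ℤ :=
  ∑ i ∈ (Finset.range (d + 1)).filter (fun i => i % 3 = t),
    (d.choose i : ℤ) *
      ∑ h ∈ Finset.range (j + 1), (-1 : ℤ) ^ h * (i.choose h : ℤ) * ((d - i).choose (j - h) : ℤ)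

/-- `κ(d,j) = (−3)^{⌈j/2⌉ − 1} · C(d,j)`. -/
def kappaH (d j : ℕ) : ℤ := (-3 : ℤ) ^ ((j + 1) / 2 - 1) * (d.choose j : ℤ)

/-!
The inner sum is the coefficient of `X ^ j` in `(1 - X) ^ i * (1 + X) ^ (d - i)`, so summing
against `C(d,i) x ^ i` gives the `X ^ j`-coefficient of `((1 + x) + (1 - x) X) ^ d`, namely
`C(d,j) (1 - x) ^ j (1 + x) ^ (d - j)`. The congruence condition `i ≡ t (mod 3)` is extracted by
averaging over the cube roots of unity `x = 1, ω, ω²`. At a primitive cube root `(1 - ω)² = -3ω`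
and `1 + ω = -ω²`, so each of the two nontrivial terms is `±(-3) ^ ⌊j/2⌋` times a power of `ω`,
and the two terms together contribute traces `ω ^ n + ω ^ (2n) ∈ {2, -1}`; which values occur
depends only on `d + t (mod 3)` and the parity of `j`.
-/

open Finset

section Krawtchouk

open Polynomial

theorem coeff_C_mul_X_add_C_pow {R : Type*} [CommSemiring R] (a b : R) (n k : ℕ) :
    ((C a * X + C b) ^ n).coeff k = a ^ k * b ^ (n - k) * n.choose k := by
  have hterm (m : ℕ) : (C a * X) ^ m * C b ^ (n - m) * (n.choose m : R[X])
      = C (a ^ m * b ^ (n - m) * n.choose m) * X ^ m := by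
    simp only [map_mul, map_pow, map_natCast]; ring
  simp only [add_pow, hterm, finsetSum_coeff, coeff_C_mul_X_pow]
  rw [sum_ite_eq]
  split_ifs with hk
  · rfl
  · simp [Nat.choose_eq_zero_of_lt (show n < k by simpa using hk)]

theorem coeff_one_sub_X_pow {R : Type*} [CommRing R] (n k : ℕ) :
    ((1 - X : R[X]) ^ n).coeff k = (-1) ^ k * n.choose k := by
  have : (1 - X : R[X]) = C (-1) * X + C 1 := by simp only [map_neg, map_one]; ring
  rw [this, coeff_C_mul_X_add_C_pow, one_pow, mul_one]

theorem coeff_one_sub_X_pow_mul_one_add_X_pow {R : Type*} [CommRing R] (a b k : ℕ) :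
    ((1 - X : R[X]) ^ a * (1 + X) ^ b).coeff k
      = ∑ h ∈ range (k + 1), (-1 : R) ^ h * a.choose h * b.choose (k - h) := by
  rw [coeff_mul, Nat.sum_antidiagonal_eq_sum_range_succ_mk]
  simp only [coeff_one_sub_X_pow, coeff_one_add_X_pow]

theorem sum_choose_mul_pow_mul_krawtchouk {R : Type*} [CommRing R] (x : R) (d j : ℕ) :
    ∑ i ∈ range (d + 1), d.choose i * x ^ i *
        ∑ h ∈ range (j + 1), (-1 : R) ^ h * i.choose h * (d - i).choose (j - h)
      = d.choose j * (1 - x) ^ j * (1 + x) ^ (d - j) := by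
  have hpoly : ∑ i ∈ range (d + 1), C (d.choose i * x ^ i) * ((1 - X) ^ i * (1 + X) ^ (d - i))
      = (C (1 - x) * X + C (1 + x)) ^ d := by
    rw [show C (1 - x) * X + C (1 + x) = C x * (1 - X) + (1 + X) by
      simp only [map_sub, map_add, map_one]; ring, add_pow]
    refine sum_congr rfl fun i _ => ?_
    simp only [map_mul, map_pow, map_natCast, mul_pow]; ring
  have := congrArg (coeff · j) hpoly
  simp only [finsetSum_coeff, coeff_C_mul, coeff_one_sub_X_pow_mul_one_add_X_pow,
    coeff_C_mul_X_add_C_pow] at this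
  rw [this]; ring

end Krawtchouk

/-- The trace `ω ^ n + ω ^ (2 * n)` of `ω ^ n`, for `ω` a primitive cube root of unity. -/
def cubeRootTrace (n : ℕ) : ℤ := if n % 3 = 0 then 2 else -1

section CubeRoot

variable {R : Type*} [CommRing R] {ω : R}

theorem pow_three_eq_one_of_sq_add_add_one (hω : ω ^ 2 + ω + 1 = 0) : ω ^ 3 = 1 := by
  linear_combination (ω - 1) * hω

theorem sq_sq_add_sq_add_one (hω : ω ^ 2 + ω + 1 = 0) : (ω ^ 2) ^ 2 + ω ^ 2 + 1 = 0 := by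
  linear_combination (ω ^ 2 - ω + 1) * hω

theorem pow_add_pow_two_mul_eq_cubeRootTrace (hω : ω ^ 2 + ω + 1 = 0) (n : ℕ) :
    ω ^ n + ω ^ (2 * n) = cubeRootTrace n := by
  have h3 := pow_three_eq_one_of_sq_add_add_one hω
  rw [pow_eq_pow_mod n h3, pow_eq_pow_mod (2 * n) h3, cubeRootTrace]
  have : n % 3 = 0 ∧ (2 * n) % 3 = 0 ∨ n % 3 = 1 ∧ (2 * n) % 3 = 2 ∨ n % 3 = 2 ∧ (2 * n) % 3 = 1 := by
    omega
  rcases this with ⟨h, h'⟩ | ⟨h, h'⟩ | ⟨h, h'⟩ <;> simp only [h, h'] <;> norm_num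
  · linear_combination hω
  · linear_combination hω

theorem sum_range_three_pow_mul (hω : ω ^ 2 + ω + 1 = 0) (n : ℕ) :
    ∑ a ∈ range 3, ω ^ (a * n) = if n % 3 = 0 then 3 else 0 := by
  have := pow_add_pow_two_mul_eq_cubeRootTrace hω n
  simp only [sum_range_succ, sum_range_zero, cubeRootTrace] at this ⊢
  split_ifs at this ⊢ <;> push_cast at this <;> linear_combination this

theorem three_mul_sum_filter_mod_three (hω : ω ^ 2 + ω + 1 = 0) {t : ℕ} (ht : t < 3)
    (s : Finset ℕ) (f : ℕ → R) :
    3 * ∑ i ∈ s with i % 3 = t, f i = ∑ a ∈ range 3, ∑ i ∈ s, ω ^ (a * (i + 2 * t)) * f i := by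
  rw [sum_comm, sum_filter, mul_sum]
  refine sum_congr rfl fun i _ => ?_
  have hmod : (i + 2 * t) % 3 = 0 ↔ i % 3 = t := by omega
  rw [← sum_mul, sum_range_three_pow_mul hω, if_congr hmod rfl rfl]
  split_ifs <;> ring

theorem three_mul_zetaH_eq_sum (hω : ω ^ 2 + ω + 1 = 0) {t : ℕ} (ht : t < 3) (d j : ℕ) :
    (3 * zetaH d j t : R) =
      ∑ a ∈ range 3, (ω ^ a) ^ (2 * t) * (d.choose j * (1 - ω ^ a) ^ j * (1 + ω ^ a) ^ (d - j)) := by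
  push_cast [zetaH]
  rw [three_mul_sum_filter_mod_three hω ht]
  refine sum_congr rfl fun a _ => ?_
  rw [← sum_choose_mul_pow_mul_krawtchouk, mul_sum]
  refine sum_congr rfl fun i _ => ?_
  rw [mul_add, pow_add, pow_mul, pow_mul, pow_mul]
  ring

theorem pow_mul_one_sub_pow_mul_one_add_pow_even (hω : ω ^ 2 + ω + 1 = 0) (t u k : ℕ) :
    ω ^ (2 * t) * (1 - ω) ^ (2 * u) * (1 + ω) ^ k
      = (-3) ^ u * (-1) ^ (2 * u + k) * ω ^ (2 * (2 * u + k + t)) := by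
  have h3u : ω ^ (3 * u) = 1 := by rw [pow_mul, pow_three_eq_one_of_sq_add_add_one hω, one_pow]
  rw [pow_mul (1 - ω), show (1 - ω) ^ 2 = -3 * ω by linear_combination hω,
    show 1 + ω = -ω ^ 2 by linear_combination hω, pow_add (-1 : R), (even_two_mul u).neg_one_pow]
  linear_combination (-(-3) ^ u * (-1) ^ k * ω ^ (2 * t + u + 2 * k)) * h3u

theorem pow_mul_one_sub_pow_mul_one_add_pow_odd (hω : ω ^ 2 + ω + 1 = 0) (t u k : ℕ) :
    ω ^ (2 * t) * (1 - ω) ^ (2 * u + 1) * (1 + ω) ^ k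
      = (-3) ^ u * (-1) ^ (2 * u + 1 + k + 1) *
          (ω ^ (2 * (2 * u + 1 + k + t) + 1) - ω ^ (2 * (2 * u + 1 + k + t) + 2)) := by
  have h3u : ω ^ (3 * u + 3) = 1 := by
    rw [show 3 * u + 3 = 3 * (u + 1) by ring, pow_mul, pow_three_eq_one_of_sq_add_add_one hω, one_pow]
  rw [pow_succ, pow_mul (1 - ω), show (1 - ω) ^ 2 = -3 * ω by linear_combination hω,
    show 1 + ω = -ω ^ 2 by linear_combination hω, show 2 * u + 1 + k + 1 = 2 * (u + 1) + k by ring,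
    pow_add (-1 : R), (even_two_mul (u + 1)).neg_one_pow]
  linear_combination (-(-3) ^ u * (-1) ^ k * ω ^ (2 * t + u + 2 * k) * (1 - ω)) * h3u

theorem three_mul_zetaH_two_mul_eq (hω : ω ^ 2 + ω + 1 = 0) {t : ℕ} (ht : t < 3) {d u : ℕ}
    (hud : 2 * u ≤ d) : (3 * zetaH d (2 * u) t : R) = d.choose (2 * u) *
      (0 ^ u * 2 ^ d + (-3) ^ u * (-1) ^ d * cubeRootTrace (2 * (d + t))) := by
  obtain ⟨k, rfl⟩ := Nat.exists_eq_add_of_le hud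
  have hzero : (0 : R) ^ (2 * u) * (1 + 1) ^ k = 0 ^ u * 2 ^ (2 * u + k) := by
    rcases u with _ | u <;> norm_num
  have h1 := pow_mul_one_sub_pow_mul_one_add_pow_even hω t u k
  have h2 := pow_mul_one_sub_pow_mul_one_add_pow_even (sq_sq_add_sq_add_one hω) t u k
  rw [three_mul_zetaH_eq_sum hω ht, ← pow_add_pow_two_mul_eq_cubeRootTrace hω]
  simp only [sum_range_succ, sum_range_zero, zero_add, pow_zero, pow_one, one_pow, sub_self,
    Nat.add_sub_cancel_left]
  linear_combination ((2 * u + k).choose (2 * u) : R) * (h1 + h2 + hzero)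

theorem three_mul_zetaH_two_mul_add_one_eq (hω : ω ^ 2 + ω + 1 = 0) {t : ℕ} (ht : t < 3)
    {d u : ℕ} (hud : 2 * u + 1 ≤ d) : (3 * zetaH d (2 * u + 1) t : R) = d.choose (2 * u + 1) *
      ((-3) ^ u * (-1) ^ (d + 1) *
        (cubeRootTrace (2 * (d + t) + 1) - cubeRootTrace (2 * (d + t) + 2))) := by
  obtain ⟨k, rfl⟩ := Nat.exists_eq_add_of_le hud
  have h1 := pow_mul_one_sub_pow_mul_one_add_pow_odd hω t u k
  have h2 := pow_mul_one_sub_pow_mul_one_add_pow_odd (sq_sq_add_sq_add_one hω) t u k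
  rw [three_mul_zetaH_eq_sum hω ht, ← pow_add_pow_two_mul_eq_cubeRootTrace hω,
    ← pow_add_pow_two_mul_eq_cubeRootTrace hω]
  simp only [sum_range_succ, sum_range_zero, zero_add, pow_zero, pow_one, one_pow, sub_self,
    Nat.add_sub_cancel_left, zero_pow (Nat.succ_ne_zero _)]
  linear_combination ((2 * u + 1 + k).choose (2 * u + 1) : R) * (h1 + h2)

end CubeRoot

theorem exists_sq_add_self_add_one_eq_zero : ∃ ω : ℂ, ω ^ 2 + ω + 1 = 0 := by
  have := (Complex.isPrimitiveRoot_exp 3 (by norm_num)).geom_sum_eq_zero (by norm_num)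
  simp only [sum_range_succ, sum_range_zero, zero_add, pow_zero, pow_one] at this
  exact ⟨_, by linear_combination this⟩

theorem three_mul_zetaH_zero {t : ℕ} (ht : t < 3) (d : ℕ) :
    3 * zetaH d 0 t = 2 ^ d + (-1) ^ d * cubeRootTrace (2 * (d + t)) := by
  obtain ⟨ω, hω⟩ := exists_sq_add_self_add_one_eq_zero
  have := three_mul_zetaH_two_mul_eq hω ht (u := 0) (d := d) (Nat.zero_le _)
  simp only [mul_zero, Nat.choose_zero_right, pow_zero, one_mul, Nat.cast_one] at this
  exact_mod_cast this

theorem zetaH_two_mul {t : ℕ} (ht : t < 3) {d u : ℕ} (hu : 1 ≤ u) (hud : 2 * u ≤ d) :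
    zetaH d (2 * u) t = -(-1) ^ d * cubeRootTrace (2 * (d + t)) * kappaH d (2 * u) := by
  obtain ⟨ω, hω⟩ := exists_sq_add_self_add_one_eq_zero
  obtain ⟨v, rfl⟩ := Nat.exists_eq_add_of_le' hu
  have := three_mul_zetaH_two_mul_eq hω ht hud
  refine mul_left_cancel₀ three_ne_zero (Int.cast_injective (α := ℂ) ?_)
  rw [kappaH, show (2 * (v + 1) + 1) / 2 - 1 = v by omega]
  push_cast at this ⊢
  rw [this]
  ring

theorem three_mul_zetaH_two_mul_add_one {t : ℕ} (ht : t < 3) {d u : ℕ} (hud : 2 * u + 1 ≤ d) :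
    3 * zetaH d (2 * u + 1) t = (-1) ^ (d + 1) *
      (cubeRootTrace (2 * (d + t) + 1) - cubeRootTrace (2 * (d + t) + 2)) * kappaH d (2 * u + 1) := by
  obtain ⟨ω, hω⟩ := exists_sq_add_self_add_one_eq_zero
  have := three_mul_zetaH_two_mul_add_one_eq hω ht hud
  apply Int.cast_injective (α := ℂ)
  rw [kappaH, show (2 * u + 1 + 1) / 2 - 1 = u by omega]
  push_cast at this ⊢
  rw [this]
  ring

theorem zetaH_of_add_mod_three_eq_two {t : ℕ} (ht : t < 3) {d : ℕ} (h : (d + t) % 3 = 2) :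
    zetaH d 0 t = (2 ^ d - (-1 : ℤ) ^ d) / 3 ∧
      ∀ j, 1 ≤ j → j ≤ d → zetaH d j t = (-1 : ℤ) ^ d * kappaH d j := by
  have tr0 : cubeRootTrace (2 * (d + t)) = -1 := if_neg (by omega)
  have tr1 : cubeRootTrace (2 * (d + t) + 1) = -1 := if_neg (by omega)
  have tr2 : cubeRootTrace (2 * (d + t) + 2) = 2 := if_pos (by omega)
  refine ⟨?_, fun j hj hjd => ?_⟩
  · have := three_mul_zetaH_zero ht d
    rw [tr0] at this
    omega
  · obtain ⟨u, rfl | rfl⟩ := j.even_or_odd'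
    · rw [zetaH_two_mul ht (by omega) hjd, tr0]
      ring
    · have := three_mul_zetaH_two_mul_add_one ht hjd
      rw [tr1, tr2, pow_succ] at this
      linarith

theorem zetaH_of_add_mod_three_eq_one {t : ℕ} (ht : t < 3) {d : ℕ} (h : (d + t) % 3 = 1) :
    zetaH d 0 t = (2 ^ d - (-1 : ℤ) ^ d) / 3 ∧
      ∀ j, 1 ≤ j → j ≤ d → zetaH d j t = (-1 : ℤ) ^ (d + j) * kappaH d j := by
  have tr0 : cubeRootTrace (2 * (d + t)) = -1 := if_neg (by omega)
  have tr1 : cubeRootTrace (2 * (d + t) + 1) = 2 := if_pos (by omega)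
  have tr2 : cubeRootTrace (2 * (d + t) + 2) = -1 := if_neg (by omega)
  refine ⟨?_, fun j hj hjd => ?_⟩
  · have := three_mul_zetaH_zero ht d
    rw [tr0] at this
    omega
  · obtain ⟨u, rfl | rfl⟩ := j.even_or_odd'
    · rw [zetaH_two_mul ht (by omega) hjd, tr0, pow_add, (even_two_mul u).neg_one_pow]
      ring
    · have := three_mul_zetaH_two_mul_add_one ht hjd
      rw [tr1, tr2] at this
      rw [show d + (2 * u + 1) = d + 1 + 2 * u by ring, pow_add, (even_two_mul u).neg_one_pow]
      linarith

theorem zetaH_of_add_mod_three_eq_zero {t : ℕ} (ht : t < 3) {d : ℕ} (h : (d + t) % 3 = 0) :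
    zetaH d 0 t = (2 ^ d + 2 * (-1 : ℤ) ^ d) / 3 ∧
      (∀ j, 2 ≤ j → j ≤ d → Even j → zetaH d j t = (-1 : ℤ) ^ (d + 1) * 2 * kappaH d j) ∧
      ∀ j, 1 ≤ j → j ≤ d → Odd j → zetaH d j t = 0 := by
  have tr0 : cubeRootTrace (2 * (d + t)) = 2 := if_pos (by omega)
  have tr1 : cubeRootTrace (2 * (d + t) + 1) = -1 := if_neg (by omega)
  have tr2 : cubeRootTrace (2 * (d + t) + 2) = -1 := if_neg (by omega)
  refine ⟨?_, fun j hj hjd ⟨u, hu⟩ => ?_, fun j _ hjd ⟨u, hu⟩ => ?_⟩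
  · have := three_mul_zetaH_zero ht d
    rw [tr0] at this
    omega
  · rw [hu, ← two_mul] at hjd ⊢
    rw [zetaH_two_mul ht (by omega) hjd, tr0]
    ring
  · subst hu
    have := three_mul_zetaH_two_mul_add_one ht hjd
    rw [tr1, tr2] at this
    simpa using this

theorem stmt_19_general (d : ℕ) (t : ℕ) (r : ℕ) (s : ℤ)
    (hs : s = -2 ∨ s = 0 ∨ s = 2) (hds : (d : ℤ) = 3 * r + s) :
    (((s = -2 ∧ t = 1) ∨ (s = 2 ∧ t = 0) ∨ (s = 0 ∧ t = 2)) →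
      zetaH d 0 t = (2 ^ d - (-1 : ℤ) ^ d) / 3 ∧
      ∀ j, 1 ≤ j → j ≤ d → zetaH d j t = (-1 : ℤ) ^ r * kappaH d j) ∧
    (((s = -2 ∧ t = 0) ∨ (s = 2 ∧ t = 2) ∨ (s = 0 ∧ t = 1)) →
      zetaH d 0 t = (2 ^ d - (-1 : ℤ) ^ d) / 3 ∧
      ∀ j, 1 ≤ j → j ≤ d → zetaH d j t = (-1 : ℤ) ^ (r + j) * kappaH d j) ∧
    (((s = -2 ∧ t = 2) ∨ (s = 2 ∧ t = 1) ∨ (s = 0 ∧ t = 0)) →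
      zetaH d 0 t = (2 ^ d + 2 * (-1 : ℤ) ^ d) / 3 ∧
      ∀ j, 2 ≤ j → j ≤ d → Even j → zetaH d j t = (-1 : ℤ) ^ (r + 1) * 2 * kappaH d j) ∧
    (((s = -2 ∧ t = 2) ∨ (s = 2 ∧ t = 1) ∨ (s = 0 ∧ t = 0)) →
      ∀ j, 1 ≤ j → j ≤ d → Odd j → zetaH d j t = 0) := by
  have hsign : (-1 : ℤ) ^ r = (-1) ^ d := neg_one_pow_congr (by simp only [Nat.even_iff]; omega)
  refine ⟨fun h => ?_, fun h => ?_, fun h => ?_, fun h => ?_⟩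
  · simpa only [hsign] using zetaH_of_add_mod_three_eq_two (t := t) (d := d) (by omega) (by omega)
  · simpa only [pow_add, hsign] using
      zetaH_of_add_mod_three_eq_one (t := t) (d := d) (by omega) (by omega)
  · simpa only [pow_add, hsign] using
      (zetaH_of_add_mod_three_eq_zero (t := t) (d := d) (by omega) (by omega)).imp_right And.left
  · exact (zetaH_of_add_mod_three_eq_zero (t := t) (d := d) (by omega) (by omega)).2.2

/-- Write `d = 3r + s` with `r ≥ 1` and `s ∈ {−2, 0, 2}`, and let
`t ∈ {0,1,2}`.  Then:
(1) if `(s,t) ∈ {(−2,1),(2,0),(0,2)}`, `ζ(d,0,t) = (2^d − (−1)^d)/3` and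
`ζ(d,j,t) = (−1)^r κ(d,j)` for `1 ≤ j ≤ d`;
(2) if `(s,t) ∈ {(−2,0),(2,2),(0,1)}`, `ζ(d,0,t) = (2^d − (−1)^d)/3` and
`ζ(d,j,t) = (−1)^{r+j} κ(d,j)` for `1 ≤ j ≤ d`;
(3) if `(s,t) ∈ {(−2,2),(2,1),(0,0)}`, `ζ(d,0,t) = (2^d + 2·(−1)^d)/3` and
`ζ(d,j,t) = (−1)^{r+1}·2·κ(d,j)` for even `2 ≤ j ≤ d`;
(4) if `(s,t) ∈ {(−2,2),(2,1),(0,0)}` and `1 ≤ j ≤ d` is odd, `ζ(d,j,t) = 0`. -/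
theorem stmt_19 (d : ℕ) (hd : 3 ≤ d) (t : ℕ) (ht : t ≤ 2) (r : ℕ) (s : ℤ)
    (hr : 1 ≤ r) (hs : s = -2 ∨ s = 0 ∨ s = 2) (hds : (d : ℤ) = 3 * r + s) :
    (((s = -2 ∧ t = 1) ∨ (s = 2 ∧ t = 0) ∨ (s = 0 ∧ t = 2)) →
      zetaH d 0 t = (2 ^ d - (-1 : ℤ) ^ d) / 3 ∧
      ∀ j, 1 ≤ j → j ≤ d → zetaH d j t = (-1 : ℤ) ^ r * kappaH d j) ∧
    (((s = -2 ∧ t = 0) ∨ (s = 2 ∧ t = 2) ∨ (s = 0 ∧ t = 1)) →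
      zetaH d 0 t = (2 ^ d - (-1 : ℤ) ^ d) / 3 ∧
      ∀ j, 1 ≤ j → j ≤ d → zetaH d j t = (-1 : ℤ) ^ (r + j) * kappaH d j) ∧
    (((s = -2 ∧ t = 2) ∨ (s = 2 ∧ t = 1) ∨ (s = 0 ∧ t = 0)) →
      zetaH d 0 t = (2 ^ d + 2 * (-1 : ℤ) ^ d) / 3 ∧
      ∀ j, 2 ≤ j → j ≤ d → Even j → zetaH d j t = (-1 : ℤ) ^ (r + 1) * 2 * kappaH d j) ∧
    (((s = -2 ∧ t = 2) ∨ (s = 2 ∧ t = 1) ∨ (s = 0 ∧ t = 0)) →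
      ∀ j, 1 ≤ j → j ≤ d → Odd j → zetaH d j t = 0) :=
  stmt_19_general d t r s hs hds
end
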